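/- arXiv:2311.08634 — 7 statements merged into one kernel-verified Lean document; each statement's English description precedes it below -/
import Mathlib

section
/- If G is a noncomplete claw-free graph, then 2·τ(G) = κ(G), i.e., the toughness of a noncomplete claw-free graph equals one half of its vertex connectivity. -/
open SimpleGraph

variable {V : Type*}

/-- `numComponents G S` is the number of connected components of `G − S`,
the graph obtained from `G` by deleting the vertices of `S`. -/
noncomputable def numComponents (G : SimpleGraph V) (S : Set V) : ℕ :=
  Nat.card ((G.induce Sᶜ).ConnectedComponent)

/-- `HasToughness G t` says that the toughness of `G` is exactly `t`, i.e.
`t = min { |S| / w(G−S) : S ⊆ V(G), w(G−S) ≥ 2 }`.  (For a complete graph no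
such `S` exists and this predicate never holds, matching `τ(G) = ∞`.) -/
def HasToughness [Fintype V] (G : SimpleGraph V) (t : ℚ) : Prop :=
  (∀ S : Finset V, 2 ≤ numComponents G ↑S →
      t ≤ (S.card : ℚ) / (numComponents G ↑S : ℚ)) ∧
  ∃ S : Finset V, 2 ≤ numComponents G ↑S ∧
      t = (S.card : ℚ) / (numComponents G ↑S : ℚ)

/-- `G` is minimally `t`-tough: `τ(G) = t` and `τ(G − e) < t` for every edge
`e` of `G` (i.e. some vertex set witnesses a ratio `< t` in `G − e`). -/
def MinimallyTough [Fintype V] (G : SimpleGraph V) (t : ℚ) : Prop :=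
  HasToughness G t ∧
  ∀ u v : V, G.Adj u v →
    ∃ S : Finset V, 2 ≤ numComponents (G.deleteEdges {s(u, v)}) ↑S ∧
      (S.card : ℚ) / (numComponents (G.deleteEdges {s(u, v)}) ↑S : ℚ) < t

/-- `G` is claw-free: it has no induced subgraph isomorphic to `K_{1,3}`. -/
def ClawFree (G : SimpleGraph V) : Prop :=
  ¬ ∃ v a b c : V, a ≠ b ∧ a ≠ c ∧ b ≠ c ∧
      G.Adj v a ∧ G.Adj v b ∧ G.Adj v c ∧
      ¬ G.Adj a b ∧ ¬ G.Adj a c ∧ ¬ G.Adj b c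

/-- The vertex connectivity `κ(G)` of a noncomplete graph: the least cardinality
of a vertex set whose deletion disconnects `G`. -/
noncomputable def vconn [Fintype V] (G : SimpleGraph V) : ℕ :=
  sInf {k | ∃ S : Finset V, S.card = k ∧ 2 ≤ numComponents G ↑S}

/-- The vertex set of the connected component of `G − S` containing `u`
(empty if `u ∈ S`). -/
def compOf (G : SimpleGraph V) (S : Set V) (u : V) : Set V :=
  {w | ∃ (hu : u ∈ Sᶜ) (hw : w ∈ Sᶜ), (G.induce Sᶜ).Reachable ⟨u, hu⟩ ⟨w, hw⟩}

/-- `Dset G S u` is the union of the components of `G − S` other than the one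
containing `u`. -/
def Dset (G : SimpleGraph V) (S : Set V) (u : V) : Set V :=
  Sᶜ \ compOf G S u

/-- `nbrsIn G X Y = N_X(Y)`: the set of vertices in `X − Y` adjacent (in `G`)
to some vertex of `Y`. -/
def nbrsIn (G : SimpleGraph V) (X Y : Set V) : Set V :=
  {x | x ∈ X \ Y ∧ ∃ y ∈ Y, G.Adj x y}

/-- The edge `uv` is a bridge of the graph `G − S`: both endpoints survive the
deletion of `S`, they are adjacent, and deleting the edge `uv` increases the
number of connected components of `G − S`. -/
def IsBridgeIn (G : SimpleGraph V) (S : Set V) (u v : V) : Prop :=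
  u ∉ S ∧ v ∉ S ∧ G.Adj u v ∧
    numComponents G S < numComponents (G.deleteEdges {s(u, v)}) S

/-- `GoodCut G t u v S`: `S` is a vertex set with `w(G−S) ≤ |S|/t`,
`w((G−e)−S) > |S|/t` and such that `e = uv` is a bridge in `G − S`. -/
def GoodCut [Fintype V] (G : SimpleGraph V) (t : ℚ) (u v : V) (S : Finset V) : Prop :=
  (numComponents G ↑S : ℚ) ≤ (S.card : ℚ) / t ∧
  (S.card : ℚ) / t < (numComponents (G.deleteEdges {s(u, v)}) ↑S : ℚ) ∧
  IsBridgeIn G ↑S u v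

/-- `S` is a minimum-cardinality vertex set as guaranteed by Lemma 2.2,
i.e. `S = S(e)` for the edge `e = uv`. -/
def IsMinGoodCut [Fintype V] (G : SimpleGraph V) (t : ℚ) (u v : V) (S : Finset V) : Prop :=
  GoodCut G t u v S ∧ ∀ S' : Finset V, GoodCut G t u v S' → S.card ≤ S'.card

/-- `x` is contained in some `2t`-vertex-cut of `G`. -/
def InTwoTCut [Fintype V] (G : SimpleGraph V) (t : ℚ) (x : V) : Prop :=
  ∃ T : Finset V, (T.card : ℚ) = 2 * t ∧ 2 ≤ numComponents G ↑T ∧ x ∈ T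

/-- A fragment of `G`: the vertex set of a connected component of `G − T` for
some minimum vertex cut `T` of `G`. -/
def IsGraphFragment [Fintype V] (G : SimpleGraph V) (A : Set V) : Prop :=
  ∃ (T : Finset V) (a : V), T.card = vconn G ∧ 2 ≤ numComponents G ↑T ∧
    a ∉ T ∧ A = compOf G ↑T a

/-- An atom of `G`: a fragment of minimum cardinality. -/
def IsGraphAtom [Fintype V] (G : SimpleGraph V) (A : Set V) : Prop :=
  IsGraphFragment G A ∧ ∀ B : Set V, IsGraphFragment G B → A.ncard ≤ B.ncard

lemma myReachable_eq_of_no_edges {W : Type*} {H : SimpleGraph W} (h : ∀ a b, ¬ H.Adj a b)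
    {a b : W} (hr : H.Reachable a b) : a = b := by
  obtain ⟨p⟩ := hr
  cases p with
  | nil => rfl
  | cons h' _ => exact absurd h' (h _ _)

lemma myWalk_stays (G : SimpleGraph V) (X : Set V) (P : V → Prop)
    (hP : ∀ a b : V, a ∈ X → b ∈ X → G.Adj a b → P a → P b) :
    ∀ {a b : X} (_ : (G.induce X).Walk a b), P a.val → P b.val := by
  intro a b p
  induction p with
  | nil => exact id
  | @cons u c w h p ih =>
      intro ha
      exact ih (hP u.val c.val u.prop c.prop h ha)

lemma myNumComp_two_le [Fintype V] (G : SimpleGraph V) (S : Finset V)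
    {x y : ((↑S : Set V)ᶜ : Set V)}
    (hne : (G.induce (↑S : Set V)ᶜ).connectedComponentMk x ≠
           (G.induce (↑S : Set V)ᶜ).connectedComponentMk y) :
    2 ≤ numComponents G ↑S := by
  have : Nontrivial ((G.induce (↑S : Set V)ᶜ).ConnectedComponent) := ⟨_, _, hne⟩
  have := Fintype.ofFinite ((G.induce (↑S : Set V)ᶜ).ConnectedComponent)
  rw [numComponents, Nat.card_eq_fintype_card]
  exact Fintype.one_lt_card_iff_nontrivial.mpr ‹_›

open Classical in
lemma key_count [Fintype V] (G : SimpleGraph V) (hcf : ClawFree G)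
    (S : Finset V) (h2 : 2 ≤ numComponents G ↑S) :
    vconn G * numComponents G ↑S ≤ 2 * S.card := by
  classical
  set X : Set V := (↑S : Set V)ᶜ with hX
  set H : SimpleGraph X := G.induce X with hH
  haveI : Fintype H.ConnectedComponent := Fintype.ofFinite _
  set NK : H.ConnectedComponent → Finset V :=
    fun K => S.filter (fun v => ∃ x : X, H.connectedComponentMk x = K ∧ G.Adj v x.val)
    with hNKdef
  have hNKsub : ∀ K, NK K ⊆ S := fun K => Finset.filter_subset _ _
  -- Claim 1 : each N(K) is a cutset, hence has card ≥ vconn G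
  have claim1 : ∀ K, vconn G ≤ (NK K).card := by
    intro K
    obtain ⟨x, hx⟩ := K.exists_rep
    -- another component
    have h2' : 1 < Nat.card H.ConnectedComponent := h2
    have : Nontrivial H.ConnectedComponent := by
      rw [Nat.card_eq_fintype_card] at h2'
      exact Fintype.one_lt_card_iff_nontrivial.mp h2'
    obtain ⟨K', hK'⟩ := exists_ne K
    obtain ⟨y, hy⟩ := K'.exists_rep
    -- the component of x, as a set of vertices of V
    set A : Set V := {w | ∃ hw : w ∈ X, H.connectedComponentMk ⟨w, hw⟩ = K} with hA
    have hxA : x.val ∈ A := ⟨x.prop, by rwa [Subtype.coe_eta]⟩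
    have hyA : y.val ∉ A := by
      rintro ⟨hw, hmk⟩
      rw [Subtype.coe_eta] at hmk
      exact hK' (hy.symm.trans hmk)
    have hxNK : x.val ∉ (↑(NK K) : Set V) := fun h => x.prop (Finset.mem_coe.mp (hNKsub K h))
    have hyNK : y.val ∉ (↑(NK K) : Set V) := fun h => y.prop (Finset.mem_coe.mp (hNKsub K h))
    -- closure of A under adjacency avoiding NK K
    have hclosed : ∀ a b : V, a ∈ (↑(NK K) : Set V)ᶜ → b ∈ (↑(NK K) : Set V)ᶜ →
        G.Adj a b → a ∈ A → b ∈ A := by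
      intro a b _ hb hadj ⟨ha', hKa⟩
      by_cases hbS : b ∈ (↑S : Set V)
      · exfalso
        apply hb
        simp only [hNKdef, Finset.coe_filter, Set.mem_setOf_eq]
        exact ⟨hbS, ⟨⟨a, ha'⟩, hKa, hadj.symm⟩⟩
      · have hb' : b ∈ X := hbS
        refine ⟨hb', ?_⟩
        have hadj' : H.Adj ⟨a, ha'⟩ ⟨b, hb'⟩ := hadj
        rw [← hKa]
        exact (ConnectedComponent.sound hadj'.symm.reachable)
    -- x and y in different components of G - NK K
    have hnr : (G.induce (↑(NK K) : Set V)ᶜ).connectedComponentMk ⟨x.val, hxNK⟩ ≠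
        (G.induce (↑(NK K) : Set V)ᶜ).connectedComponentMk ⟨y.val, hyNK⟩ := by
      intro heq
      obtain ⟨p⟩ := (ConnectedComponent.eq).mp heq
      exact hyA (myWalk_stays G _ (· ∈ A) hclosed p hxA)
    exact Nat.sInf_le ⟨NK K, rfl, myNumComp_two_le G (NK K) hnr⟩
  -- Claim 2 : each vertex of S is adjacent to at most 2 components
  have claim2 : ∀ v ∈ S, (Finset.univ.filter (fun K => v ∈ NK K)).card ≤ 2 := by
    intro v hv
    by_contra hgt
    push_neg at hgt
    obtain ⟨T, hTsub, hT3⟩ := Finset.exists_subset_card_eq hgt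
    obtain ⟨K1, K2, K3, h12, h13, h23, hTeq⟩ := Finset.card_eq_three.mp hT3
    have hmem : ∀ K ∈ T, ∃ x : X, H.connectedComponentMk x = K ∧ G.Adj v x.val := by
      intro K hK
      have := hTsub hK
      simp only [Finset.mem_filter, hNKdef] at this
      exact this.2.2
    obtain ⟨x1, hx1, ha1⟩ := hmem K1 (by rw [hTeq]; simp)
    obtain ⟨x2, hx2, ha2⟩ := hmem K2 (by rw [hTeq]; simp)
    obtain ⟨x3, hx3, ha3⟩ := hmem K3 (by rw [hTeq]; simp)
    have hne : ∀ (a b : X) (Ka Kb : H.ConnectedComponent),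
        H.connectedComponentMk a = Ka → H.connectedComponentMk b = Kb → Ka ≠ Kb →
        a.val ≠ b.val ∧ ¬ G.Adj a.val b.val := by
      intro a b Ka Kb hKa hKb hne
      constructor
      · intro h; exact hne (by rw [← hKa, ← hKb, Subtype.ext h])
      · intro h
        have : H.Adj a b := h
        exact hne (by rw [← hKa, ← hKb]; exact ConnectedComponent.sound this.reachable)
    obtain ⟨d12, n12⟩ := hne x1 x2 K1 K2 hx1 hx2 h12
    obtain ⟨d13, n13⟩ := hne x1 x3 K1 K3 hx1 hx3 h13
    obtain ⟨d23, n23⟩ := hne x2 x3 K2 K3 hx2 hx3 h23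
    exact hcf ⟨v, x1.val, x2.val, x3.val, d12, d13, d23, ha1, ha2, ha3, n12, n13, n23⟩
  -- double counting
  have h1 : ∀ K, (NK K).card = ∑ v ∈ S, if v ∈ NK K then 1 else 0 := by
    intro K
    rw [← Finset.card_filter]
    congr 1
    ext v
    simp only [Finset.mem_filter]
    exact ⟨fun h => ⟨hNKsub K h, h⟩, fun h => h.2⟩
  have hnum : numComponents G ↑S = Fintype.card H.ConnectedComponent := by
    rw [numComponents, Nat.card_eq_fintype_card]
  calc vconn G * numComponents G ↑S
      = ∑ _K : H.ConnectedComponent, vconn G := by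
        rw [Finset.sum_const, hnum, Finset.card_univ, mul_comm, smul_eq_mul]
    _ ≤ ∑ K : H.ConnectedComponent, (NK K).card :=
        Finset.sum_le_sum (fun K _ => claim1 K)
    _ = ∑ K : H.ConnectedComponent, ∑ v ∈ S, if v ∈ NK K then 1 else 0 :=
        Finset.sum_congr rfl (fun K _ => h1 K)
    _ = ∑ v ∈ S, ∑ K : H.ConnectedComponent, if v ∈ NK K then 1 else 0 :=
        Finset.sum_comm
    _ = ∑ v ∈ S, (Finset.univ.filter (fun K => v ∈ NK K)).card := by
        refine Finset.sum_congr rfl (fun v _ => ?_)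
        rw [Finset.card_filter]
    _ ≤ ∑ _v ∈ S, 2 := Finset.sum_le_sum claim2
    _ = 2 * S.card := by rw [Finset.sum_const, mul_comm, smul_eq_mul]


lemma cut_exists [Fintype V] (G : SimpleGraph V) (hnc : G ≠ ⊤) :
    ∃ S : Finset V, 2 ≤ numComponents G ↑S := by
  classical
  have : ∃ u v : V, u ≠ v ∧ ¬ G.Adj u v := by
    by_contra h
    push_neg at h
    exact hnc (by ext a b; simp only [top_adj]; exact ⟨Adj.ne, fun hab => h a b hab⟩)
  obtain ⟨u, v, huv, hnadj⟩ := this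
  refine ⟨Finset.univ \ {u, v}, ?_⟩
  set S : Finset V := Finset.univ \ {u, v} with hS
  have hset : ((↑S : Set V))ᶜ = ({u, v} : Set V) := by
    ext x
    simp only [hS, Set.mem_compl_iff, Finset.coe_sdiff, Finset.coe_univ, Set.mem_diff,
      Set.mem_univ, true_and, not_not, Finset.coe_insert, Finset.coe_singleton,
      Set.mem_insert_iff, Set.mem_singleton_iff, Finset.mem_coe, Finset.mem_insert,
      Finset.mem_singleton]
  have hu : u ∈ ((↑S : Set V))ᶜ := by rw [hset]; exact Set.mem_insert _ _
  have hv : v ∈ ((↑S : Set V))ᶜ := by rw [hset]; exact Set.mem_insert_iff.mpr (Or.inr rfl)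
  apply myNumComp_two_le G _ (x := ⟨u, hu⟩) (y := ⟨v, hv⟩)
  intro heq
  have hreach := (ConnectedComponent.eq).mp heq
  have hnoedge : ∀ a b : ↥(((↑S : Set V))ᶜ), ¬ (G.induce ((↑S : Set V))ᶜ).Adj a b := by
    intro a b hab
    have hadj : G.Adj a.val b.val := hab
    have ha : a.val ∈ ({u, v} : Set V) := (Set.ext_iff.mp hset _).mp a.prop
    have hb : b.val ∈ ({u, v} : Set V) := (Set.ext_iff.mp hset _).mp b.prop
    simp only [Set.mem_insert_iff, Set.mem_singleton_iff] at ha hb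
    rcases ha with ha | ha <;> rcases hb with hb | hb
    · exact hadj.ne (ha.trans hb.symm)
    · exact hnadj (by rw [← ha, ← hb]; exact hadj)
    · exact hnadj (by rw [← ha, ← hb]; exact hadj.symm)
    · exact hadj.ne (ha.trans hb.symm)
  have := myReachable_eq_of_no_edges hnoedge hreach
  exact huv (congrArg Subtype.val this)


/-- If `G` is a noncomplete claw-free graph, then `2·τ(G) = κ(G)`. -/
theorem claw_free_toughness_eq_half_connectivity [Fintype V] (G : SimpleGraph V)
    (hnc : G ≠ ⊤) (hcf : ClawFree G) (t : ℚ) (ht : HasToughness G t) :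
    2 * t = (vconn G : ℚ) := by

  obtain ⟨hmin, S₀, hc₀, ht₀⟩ := ht
  obtain ⟨S1, hS1⟩ := cut_exists G hnc
  have hne : {k | ∃ S : Finset V, S.card = k ∧ 2 ≤ numComponents G ↑S}.Nonempty :=
    ⟨S1.card, S1, rfl, hS1⟩
  obtain ⟨T, hTcard, hT2⟩ := Nat.sInf_mem hne
  have hvT : vconn G = T.card := hTcard.symm
  have hlow : (vconn G : ℚ) / 2 ≤ t := by
    have hk := key_count G hcf S₀ hc₀
    have hc₀' : (0 : ℚ) < (numComponents G ↑S₀ : ℚ) := by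
      have : (0:ℕ) < numComponents G ↑S₀ := lt_of_lt_of_le (by norm_num) hc₀
      exact_mod_cast this
    rw [ht₀, div_le_div_iff₀ (by norm_num) hc₀']
    have : (vconn G : ℚ) * (numComponents G ↑S₀ : ℚ) ≤ 2 * (S₀.card : ℚ) := by
      exact_mod_cast hk
    linarith
  have hup : t ≤ (vconn G : ℚ) / 2 := by
    have h1 := hmin T hT2
    have hw : (2 : ℚ) ≤ (numComponents G ↑T : ℚ) := by exact_mod_cast hT2
    have h2 : (T.card : ℚ) / (numComponents G ↑T : ℚ) ≤ (T.card : ℚ) / 2 :=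
      div_le_div_of_nonneg_left (by positivity) (by norm_num) hw
    rw [hvT]
    exact le_trans h1 h2
  linarith
end

section
/- Let t be a positive rational number and G a minimally t-tough graph. Then for every edge e of G, either e is a bridge of G, or there exists a vertex set S ⊆ V(G) such that w(G−S) ≤ |S|/t, w((G−e)−S) > |S|/t, and e is a bridge in G−S. -/
open SimpleGraph

variable {V : Type*}

lemma induce_deleteEdges_eq (G : SimpleGraph V) (u v : V) (S : Set V) (hu : u ∈ S) :
    (G.deleteEdges {s(u, v)}).induce Sᶜ = G.induce Sᶜ := by
  ext a b
  simp only [comap_adj, Function.Embedding.coe_subtype, deleteEdges_adj, Set.mem_singleton_iff]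
  constructor
  · rintro ⟨h, -⟩; exact h
  · intro h
    refine ⟨h, fun he => ?_⟩
    rw [Sym2.eq_iff] at he
    rcases he with ⟨h1, h2⟩ | ⟨h1, h2⟩
    · exact a.2 (h1 ▸ hu)
    · exact b.2 (h2 ▸ hu)

lemma numComp_deleteEdges_mem (G : SimpleGraph V) (u v : V) (S : Set V) (hu : u ∈ S) :
    numComponents (G.deleteEdges {s(u, v)}) S = numComponents G S := by
  unfold numComponents
  rw [induce_deleteEdges_eq G u v S hu]

lemma numComp_le_deleteEdges [Fintype V] (G : SimpleGraph V) (E : Set (Sym2 V)) (S : Set V) :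
    numComponents G S ≤ numComponents (G.deleteEdges E) S := by
  have hle : (G.deleteEdges E).induce Sᶜ ≤ G.induce Sᶜ := fun {a b} h => G.deleteEdges_le E h
  have hsurj : Function.Surjective (ConnectedComponent.map (Hom.ofLE hle)) := by
    intro c
    refine c.ind fun x => ?_
    exact ⟨(G.deleteEdges E).induce Sᶜ |>.connectedComponentMk x, rfl⟩
  exact Nat.card_le_card_of_surjective _ hsurj

lemma two_le_numComp (G : SimpleGraph V) [Fintype V] (S : Set V) {a b : V}
    (ha : a ∈ Sᶜ) (hb : b ∈ Sᶜ)
    (h : ¬ (G.induce Sᶜ).Reachable ⟨a, ha⟩ ⟨b, hb⟩) : 2 ≤ numComponents G S := by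
  unfold numComponents
  rw [Nat.succ_le_iff, Finite.one_lt_card_iff_nontrivial]
  exact ⟨⟨(G.induce Sᶜ).connectedComponentMk ⟨a, ha⟩, (G.induce Sᶜ).connectedComponentMk ⟨b, hb⟩,
    fun hc => h (ConnectedComponent.eq.mp hc)⟩⟩

lemma exists_unreachable_of_two_le (G : SimpleGraph V) [Fintype V] (S : Set V)
    (h : 2 ≤ numComponents G S) :
    ∃ a b : ↥Sᶜ, a ≠ b ∧ ¬ (G.induce Sᶜ).Reachable a b := by
  unfold numComponents at h
  rw [Nat.succ_le_iff, Finite.one_lt_card_iff_nontrivial] at h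
  obtain ⟨c1, c2, hne⟩ := h
  obtain ⟨a, ha⟩ := c1.exists_rep
  obtain ⟨b, hb⟩ := c2.exists_rep
  refine ⟨a, b, fun hab => hne ?_, fun hr => hne ?_⟩
  · rw [← ha, ← hb, hab]
  · rw [← ha, ← hb]
    exact ConnectedComponent.eq.mpr hr

lemma reachable_induce_mono (H : SimpleGraph V) {A B : Set V} (hAB : A ⊆ B) {x y : V}
    (hx : x ∈ A) (hy : y ∈ A) (h : (H.induce A).Reachable ⟨x, hx⟩ ⟨y, hy⟩) :
    (H.induce B).Reachable ⟨x, hAB hx⟩ ⟨y, hAB hy⟩ := by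
  exact h.map (⟨fun a => ⟨a.1, hAB a.2⟩, fun {a b} hab => hab⟩ : H.induce A →g H.induce B)

/-- Let `t > 0` be rational and `G` minimally `t`-tough.  For every edge
`e = uv` of `G`, either `e` is a bridge of `G`, or there is a vertex set `S`
with `w(G−S) ≤ |S|/t`, `w((G−e)−S) > |S|/t`, and `e` a bridge in `G − S`. -/
theorem minimally_t_tough_edge_bridge_or_good_cut [Fintype V]
    (G : SimpleGraph V) (t : ℚ) (ht : 0 < t) (hmt : MinimallyTough G t)
    (u v : V) (huv : G.Adj u v) :
    IsBridgeIn G (∅ : Set V) u v ∨ ∃ S : Finset V, GoodCut G t u v S := by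
  classical
  obtain ⟨⟨htough, S₀, hS₀2, hS₀eq⟩, hmin⟩ := hmt
  obtain ⟨S, hS2, hSlt⟩ := hmin u v huv
  have hswap : ({s(u,v)} : Set (Sym2 V)) = {s(v,u)} := by rw [Sym2.eq_swap]
  have hu : u ∉ (S : Set V) := by
    intro hu
    rw [numComp_deleteEdges_mem G u v _ hu] at hS2 hSlt
    exact absurd (htough S hS2) (not_le.mpr hSlt)
  have hv : v ∉ (S : Set V) := by
    intro hv
    rw [hswap, numComp_deleteEdges_mem G v u _ hv] at hS2 hSlt
    exact absurd (htough S hS2) (not_le.mpr hSlt)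
  have hww' : numComponents G ↑S ≤ numComponents (G.deleteEdges {s(u,v)}) ↑S :=
    numComp_le_deleteEdges G _ _
  have hwlt : numComponents G ↑S < numComponents (G.deleteEdges {s(u,v)}) ↑S := by
    rcases lt_or_eq_of_le hww' with h | h
    · exact h
    · rw [← h] at hS2 hSlt
      exact absurd (htough S hS2) (not_le.mpr hSlt)
  by_cases hSe : S = ∅
  · left
    subst hSe
    refine ⟨Set.notMem_empty u, Set.notMem_empty v, huv, ?_⟩
    simpa using hwlt
  · right
    have hw'2 : (2:ℚ) ≤ (numComponents (G.deleteEdges {s(u,v)}) ↑S : ℚ) := by exact_mod_cast hS2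
    have hw'pos : (0:ℚ) < (numComponents (G.deleteEdges {s(u,v)}) ↑S : ℚ) :=
      lt_of_lt_of_le two_pos hw'2
    refine ⟨S, ?_, ?_, hu, hv, huv, hwlt⟩
    · -- w(G-S) ≤ |S|/t
      by_cases hw2 : 2 ≤ numComponents G ↑S
      · have hto := htough S hw2
        have hwpos : (0:ℚ) < (numComponents G ↑S : ℚ) := by
          have : (2:ℚ) ≤ (numComponents G ↑S : ℚ) := by exact_mod_cast hw2
          linarith
        rw [le_div_iff₀ hwpos] at hto
        rw [le_div_iff₀ ht, mul_comm]
        exact hto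
      · have hwle1 : (numComponents G ↑S : ℚ) ≤ 1 := by
          have : numComponents G ↑S ≤ 1 := by omega
          exact_mod_cast this
        have hcard1 : (1:ℚ) ≤ (S.card : ℚ) := by
          exact_mod_cast Finset.card_pos.mpr (Finset.nonempty_of_ne_empty hSe)
        suffices hts : t ≤ (S.card : ℚ) by
          rw [le_div_iff₀ ht]
          have h1 : (numComponents G ↑S : ℚ) * t ≤ 1 * t :=
            mul_le_mul_of_nonneg_right hwle1 ht.le
          linarith
        -- the heart: t ≤ |S|
        have huc : u ∈ ((S : Set V))ᶜ := hu
        have hvc : v ∈ ((S : Set V))ᶜ := hv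
        by_cases hc1 : ∃ x, ∃ hx : x ∈ ((S : Set V))ᶜ, x ≠ u ∧
            ¬ ((G.deleteEdges {s(u,v)}).induce ((S : Set V))ᶜ).Reachable ⟨x, hx⟩ ⟨v, hvc⟩
        · obtain ⟨x, hx, hxu, hnr⟩ := hc1
          have huS : u ∉ S := fun h => hu (Finset.mem_coe.mpr h)
          have hTcard : (insert u S).card = S.card + 1 := Finset.card_insert_of_notMem huS
          have hxT : x ∈ ((↑(insert u S) : Set V))ᶜ := by
            simp only [Finset.coe_insert, Set.mem_compl_iff, Set.mem_insert_iff]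
            push_neg
            exact ⟨hxu, hx⟩
          have hvT : v ∈ ((↑(insert u S) : Set V))ᶜ := by
            simp only [Finset.coe_insert, Set.mem_compl_iff, Set.mem_insert_iff]
            push_neg
            exact ⟨huv.ne', hv⟩
          have hsub : ((↑(insert u S) : Set V))ᶜ ⊆ ((S : Set V))ᶜ :=
            Set.compl_subset_compl.mpr (Finset.coe_subset.mpr (Finset.subset_insert u S))
          have h2T : 2 ≤ numComponents G ↑(insert u S) := by
            refine two_le_numComp G _ hxT hvT ?_
            intro hreach
            have humem : u ∈ (↑(insert u S) : Set V) :=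
              Finset.mem_coe.mpr (Finset.mem_insert_self u S)
            rw [← induce_deleteEdges_eq G u v (↑(insert u S) : Set V) humem] at hreach
            exact hnr (reachable_induce_mono _ hsub hxT hvT hreach)
          have hto := htough (insert u S) h2T
          have hwT2 : (2:ℚ) ≤ (numComponents G ↑(insert u S) : ℚ) := by exact_mod_cast h2T
          have hwTpos : (0:ℚ) < (numComponents G ↑(insert u S) : ℚ) := by linarith
          rw [le_div_iff₀ hwTpos] at hto
          have h2t : t * 2 ≤ ((insert u S).card : ℚ) :=
            le_trans (mul_le_mul_of_nonneg_left hwT2 ht.le) hto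
          rw [hTcard] at h2t
          push_cast at h2t
          linarith
        · by_cases hc2 : ∃ y, ∃ hy : y ∈ ((S : Set V))ᶜ, y ≠ v ∧
              ¬ ((G.deleteEdges {s(u,v)}).induce ((S : Set V))ᶜ).Reachable ⟨y, hy⟩ ⟨u, huc⟩
          · obtain ⟨y, hy, hyv, hnr⟩ := hc2
            have hvS : v ∉ S := fun h => hv (Finset.mem_coe.mpr h)
            have hTcard : (insert v S).card = S.card + 1 := Finset.card_insert_of_notMem hvS
            have hyT : y ∈ ((↑(insert v S) : Set V))ᶜ := by
              simp only [Finset.coe_insert, Set.mem_compl_iff, Set.mem_insert_iff]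
              push_neg
              exact ⟨hyv, hy⟩
            have huT : u ∈ ((↑(insert v S) : Set V))ᶜ := by
              simp only [Finset.coe_insert, Set.mem_compl_iff, Set.mem_insert_iff]
              push_neg
              exact ⟨huv.ne, hu⟩
            have hsub : ((↑(insert v S) : Set V))ᶜ ⊆ ((S : Set V))ᶜ :=
              Set.compl_subset_compl.mpr (Finset.coe_subset.mpr (Finset.subset_insert v S))
            have h2T : 2 ≤ numComponents G ↑(insert v S) := by
              refine two_le_numComp G _ hyT huT ?_
              intro hreach
              have hvmem : v ∈ (↑(insert v S) : Set V) :=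
                Finset.mem_coe.mpr (Finset.mem_insert_self v S)
              rw [← induce_deleteEdges_eq G v u (↑(insert v S) : Set V) hvmem, ← hswap] at hreach
              exact hnr (reachable_induce_mono _ hsub hyT huT hreach)
            have hto := htough (insert v S) h2T
            have hwT2 : (2:ℚ) ≤ (numComponents G ↑(insert v S) : ℚ) := by exact_mod_cast h2T
            have hwTpos : (0:ℚ) < (numComponents G ↑(insert v S) : ℚ) := by linarith
            rw [le_div_iff₀ hwTpos] at hto
            have h2t : t * 2 ≤ ((insert v S).card : ℚ) :=
              le_trans (mul_le_mul_of_nonneg_left hwT2 ht.le) hto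
            rw [hTcard] at h2t
            push_cast at h2t
            linarith
          · -- neither: Sᶜ ⊆ {u, v}
            push_neg at hc1 hc2
            obtain ⟨a, b, hab, hnr⟩ := exists_unreachable_of_two_le _ _ hS2
            by_cases hz : ∃ z, ∃ hz : z ∈ ((S : Set V))ᶜ, z ≠ u ∧ z ≠ v
            · exfalso
              obtain ⟨z, hz, hzu, hzv⟩ := hz
              have huvr : ((G.deleteEdges {s(u,v)}).induce ((S : Set V))ᶜ).Reachable
                  ⟨u, huc⟩ ⟨v, hvc⟩ :=
                (hc2 z hz hzv).symm.trans (hc1 z hz hzu)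
              have hall : ∀ p : ↥((S : Set V))ᶜ,
                  ((G.deleteEdges {s(u,v)}).induce ((S : Set V))ᶜ).Reachable p ⟨v, hvc⟩ := by
                intro p
                by_cases hpu : p.1 = u
                · have : p = ⟨u, huc⟩ := Subtype.ext hpu
                  rw [this]; exact huvr
                · exact hc1 p.1 p.2 hpu
              exact hnr ((hall a).trans (hall b).symm)
            · push_neg at hz
              obtain ⟨a0, b0, hab0, -⟩ := exists_unreachable_of_two_le G ↑S₀ hS₀2
              have hab0' : (a0 : V) ≠ (b0 : V) := fun h => hab0 (Subtype.ext h)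
              have h2S₀c : 2 ≤ (S₀ᶜ : Finset V).card := by
                have hsub : ({(a0 : V), (b0 : V)} : Finset V) ⊆ S₀ᶜ := by
                  intro z hz'
                  simp only [Finset.mem_insert, Finset.mem_singleton] at hz'
                  rcases hz' with rfl | rfl
                  · exact Finset.mem_compl.mpr fun h => a0.2 (Finset.mem_coe.mpr h)
                  · exact Finset.mem_compl.mpr fun h => b0.2 (Finset.mem_coe.mpr h)
                calc 2 = ({(a0 : V), (b0 : V)} : Finset V).card := (Finset.card_pair hab0').symm
                  _ ≤ _ := Finset.card_le_card hsub
              have hScle : (Sᶜ : Finset V).card ≤ 2 := by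
                have hsub2 : (Sᶜ : Finset V) ⊆ {u, v} := by
                  intro z hz'
                  have hzS : z ∈ ((S : Set V))ᶜ := by
                    simpa using Finset.mem_compl.mp hz'
                  rcases eq_or_ne z u with rfl | hzu
                  · simp
                  · simp [hz z hzS hzu]
                calc (Sᶜ : Finset V).card ≤ ({u, v} : Finset V).card :=
                      Finset.card_le_card hsub2
                  _ ≤ 2 := by simpa using Finset.card_insert_le u ({v} : Finset V)
              have h1 := Finset.card_add_card_compl S
              have h2 := Finset.card_add_card_compl S₀
              have hle : S₀.card ≤ S.card := by omega
              have hw₀2 : (2:ℚ) ≤ (numComponents G ↑S₀ : ℚ) := by exact_mod_cast hS₀2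
              have hw₀pos : (0:ℚ) < (numComponents G ↑S₀ : ℚ) := by linarith
              have heq : t * (numComponents G ↑S₀ : ℚ) = (S₀.card : ℚ) := by
                rw [hS₀eq]
                field_simp
              have hcc : (S₀.card : ℚ) ≤ (S.card : ℚ) := by exact_mod_cast hle
              have hmul : t * 2 ≤ t * (numComponents G ↑S₀ : ℚ) :=
                mul_le_mul_of_nonneg_left hw₀2 ht.le
              linarith
    · -- |S|/t < w((G-e)-S)
      rw [div_lt_iff₀ hw'pos] at hSlt
      rw [div_lt_iff₀ ht, mul_comm]
      exact hSlt
end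

section
/- Let t be a positive rational number with 2t an integer, let G be a minimally t-tough graph, and let e = uv be a non-bridge edge of G. Let S(e) be a minimum-cardinality vertex set S ⊆ V(G) with w(G−S) ≤ |S|/t, w((G−e)−S) > |S|/t, and such that e is a bridge in G−S. If G−S(e) is connected (i.e., D(e) = ∅), then δ(G) ≤ 2t or each of u and v is contained in a 2t-vertex-cut of G. -/
open SimpleGraph

variable {V : Type*}

/-! Since `G − S` is connected, `(G − e) − S` consists of the components of `u` and of `v`, which
differ because `e` is a bridge of `G − S`. Hence `|S|/t < 2`, i.e. `|S| + 1 ≤ 2t` as `2t` is an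
integer. If an endpoint, say `u`, has no neighbour outside `S ∪ {v}`, then `deg u ≤ |S| + 1 ≤ 2t`.
Otherwise `S ∪ {u}` separates `v` from such a neighbour, so toughness gives `2t ≤ |S ∪ {u}|`, and
`S ∪ {u}` is a `2t`-vertex-cut containing `u`. -/

namespace SimpleGraph

variable {W : Type*} {H K : SimpleGraph W} {a b u v x : W}

theorem Reachable.reachable_or_of_le_sup_edge (hK : K ≤ H ⊔ edge u v) (h : K.Reachable u x) :
    H.Reachable u x ∨ H.Reachable v x := by
  rw [reachable_iff_reflTransGen] at h
  induction h with
  | refl => exact .inl .rfl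
  | tail _ hyz ih =>
    rcases hK hyz with hH | he
    · exact ih.imp (·.trans hH.reachable) (·.trans hH.reachable)
    · rcases (edge_adj ..).mp he with ⟨⟨rfl, rfl⟩ | ⟨rfl, rfl⟩, -⟩
      · exact .inr .rfl
      · exact .inl .rfl

theorem card_connectedComponent_le_two (h : ∀ x, H.Reachable a x ∨ H.Reachable b x) :
    Nat.card H.ConnectedComponent ≤ 2 := by
  have hsurj : Function.Surjective
      (fun i : Bool => if i then H.connectedComponentMk a else H.connectedComponentMk b) := by
    refine ConnectedComponent.ind fun x => ?_
    rcases h x with hx | hx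
    · exact ⟨true, ConnectedComponent.sound hx⟩
    · exact ⟨false, ConnectedComponent.sound hx⟩
  simpa using Nat.card_le_card_of_surjective _ hsurj

end SimpleGraph

section Cuts

variable {G : SimpleGraph V} {S : Set V} {u v w : V}

theorem numComponents_le_one_iff [Finite V] :
    numComponents G S ≤ 1 ↔ (G.induce Sᶜ).Preconnected := by
  rw [numComponents, Finite.card_le_one_iff_subsingleton]
  refine ⟨fun h x y => ConnectedComponent.exact (Subsingleton.elim _ _), ?_⟩
  exact Preconnected.subsingleton_connectedComponent

theorem numComponents_pos [Finite V] (hu : u ∉ S) : 0 < numComponents G S :=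
  have : Nonempty ((G.induce Sᶜ).ConnectedComponent) := ⟨(G.induce Sᶜ).connectedComponentMk ⟨u, hu⟩⟩
  Nat.card_pos

theorem preconnected_induce_compl_of_Dset_eq_empty (hD : Dset G S u = ∅) :
    (G.induce Sᶜ).Preconnected := by
  have hreach (x : ↥Sᶜ) : x.1 ∈ compOf G S u := by
    by_contra hx
    exact (Set.eq_empty_iff_forall_notMem.mp hD) x ⟨x.2, hx⟩
  intro x y
  obtain ⟨_, _, hux⟩ := hreach x
  obtain ⟨_, _, huy⟩ := hreach y
  exact hux.symm.trans huy

theorem induce_le_deleteEdges_induce_sup_edge {X : Set V} (hu : u ∈ X) (hv : v ∈ X) :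
    G.induce X ≤ (G.deleteEdges {s(u, v)}).induce X ⊔ edge ⟨u, hu⟩ ⟨v, hv⟩ := by
  intro x y hxy
  by_cases he : s(x.1, y.1) = s(u, v)
  · right
    rw [edge_adj]
    refine ⟨?_, hxy.ne⟩
    rcases Sym2.eq_iff.mp he with ⟨hx, hy⟩ | ⟨hx, hy⟩
    · exact .inl ⟨Subtype.ext hx, Subtype.ext hy⟩
    · exact .inr ⟨Subtype.ext hx, Subtype.ext hy⟩
  · left
    exact deleteEdges_adj.mpr ⟨hxy, he⟩

theorem reachable_or_of_preconnected_induce {X : Set V} (hu : u ∈ X) (hv : v ∈ X)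
    (hpre : (G.induce X).Preconnected) (x : ↥X) :
    ((G.deleteEdges {s(u, v)}).induce X).Reachable ⟨u, hu⟩ x ∨
      ((G.deleteEdges {s(u, v)}).induce X).Reachable ⟨v, hv⟩ x :=
  (hpre _ x).reachable_or_of_le_sup_edge (induce_le_deleteEdges_induce_sup_edge hu hv)

theorem numComponents_deleteEdges_le_two (hu : u ∉ S) (hv : v ∉ S)
    (hpre : (G.induce Sᶜ).Preconnected) : numComponents (G.deleteEdges {s(u, v)}) S ≤ 2 :=
  card_connectedComponent_le_two (reachable_or_of_preconnected_induce hu hv hpre)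

theorem not_reachable_of_isBridgeIn [Finite V] (hpre : (G.induce Sᶜ).Preconnected)
    (hb : IsBridgeIn G S u v) :
    ¬ ((G.deleteEdges {s(u, v)}).induce Sᶜ).Reachable ⟨u, hb.1⟩ ⟨v, hb.2.1⟩ := by
  intro huv
  have hpre' : ((G.deleteEdges {s(u, v)}).induce Sᶜ).Preconnected := by
    have hfromu (x : ↥Sᶜ) : ((G.deleteEdges {s(u, v)}).induce Sᶜ).Reachable ⟨u, hb.1⟩ x :=
      (reachable_or_of_preconnected_induce hb.1 hb.2.1 hpre x).elim id huv.trans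
    exact fun x y => (hfromu x).symm.trans (hfromu y)
  have := numComponents_le_one_iff.mpr hpre'
  have := numComponents_pos (G := G) hb.1
  have := hb.2.2.2
  omega

/-- Deleting `u` already separates `v` from the other neighbours of `u` in `G − S`, since a path
avoiding `u` does not use the edge `uv`. -/
theorem two_le_numComponents_insert [Finite V] (hu : u ∉ S) (hv : v ∉ S) (huv : u ≠ v)
    (hnr : ¬ ((G.deleteEdges {s(u, v)}).induce Sᶜ).Reachable ⟨u, hu⟩ ⟨v, hv⟩)
    (huw : G.Adj u w) (hwS : w ∉ S) (hwv : w ≠ v) :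
    2 ≤ numComponents G (insert u S) := by
  have hsub : (insert u S)ᶜ ⊆ Sᶜ := Set.compl_subset_compl.mpr (Set.subset_insert u S)
  let f : G.induce (insert u S)ᶜ →g (G.deleteEdges {s(u, v)}).induce Sᶜ :=
    { toFun := Set.inclusion hsub
      map_rel' := fun {x y} hxy => by
        refine deleteEdges_adj.mpr ⟨hxy, fun he => ?_⟩
        rcases Sym2.eq_iff.mp he with ⟨hx, -⟩ | ⟨-, hy⟩
        · exact x.2 (.inl hx)
        · exact y.2 (.inl hy) }
  have hv' : v ∈ (insert u S)ᶜ := by simp [huv.symm, hv]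
  have hw' : w ∈ (insert u S)ᶜ := by simp [huw.ne.symm, hwS]
  rw [← not_lt, Nat.lt_succ_iff, numComponents_le_one_iff]
  intro hpre
  have huw' : ((G.deleteEdges {s(u, v)}).induce Sᶜ).Adj ⟨u, hu⟩ ⟨w, hwS⟩ :=
    deleteEdges_adj.mpr ⟨huw, fun he => hwv (Sym2.congr_right.mp he)⟩
  exact hnr (huw'.reachable.trans ((hpre ⟨w, hw'⟩ ⟨v, hv'⟩).map f))

end Cuts

theorem GoodCut.card_add_one_le_two_mul [Fintype V] {G : SimpleGraph V} {t : ℚ} {u v : V}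
    {S : Finset V} (hg : GoodCut G t u v S) (ht : 0 < t) (h2t : ∃ k : ℤ, (k : ℚ) = 2 * t)
    (h2 : numComponents (G.deleteEdges {s(u, v)}) ↑S ≤ 2) :
    (S.card : ℚ) + 1 ≤ 2 * t := by
  obtain ⟨k, hk⟩ := h2t
  have hlt : (S.card : ℚ) < k := by
    have : (S.card : ℚ) / t < 2 := hg.2.1.trans_le (by exact_mod_cast h2)
    rw [div_lt_iff₀ ht] at this
    linarith
  have : (S.card : ℤ) + 1 ≤ k := Int.add_one_le_of_lt (by exact_mod_cast hlt)
  rw [← hk]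
  exact_mod_cast this

theorem HasToughness.two_mul_le_card [Fintype V] {G : SimpleGraph V} {t : ℚ} {T : Finset V}
    (hG : HasToughness G t) (hT : 2 ≤ numComponents G ↑T) : 2 * t ≤ T.card := by
  have hTq : (2 : ℚ) ≤ numComponents G ↑T := by exact_mod_cast hT
  have := hG.1 T hT
  rw [le_div_iff₀ (by linarith)] at this
  nlinarith

theorem degree_le_or_inTwoTCut [Fintype V] {G : SimpleGraph V} [DecidableRel G.Adj] {t : ℚ}
    {u v : V} {S : Finset V} (hG : HasToughness G t) (hS : (S.card : ℚ) + 1 ≤ 2 * t)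
    (hu : u ∉ (S : Set V)) (hv : v ∉ (S : Set V)) (huv : u ≠ v)
    (hnr : ¬ ((G.deleteEdges {s(u, v)}).induce (↑S)ᶜ).Reachable ⟨u, hu⟩ ⟨v, hv⟩) :
    (G.degree u : ℚ) ≤ 2 * t ∨ InTwoTCut G t u := by
  classical
  by_cases hw : ∃ w, G.Adj u w ∧ w ∉ S ∧ w ≠ v
  · obtain ⟨w, huw, hwS, hwv⟩ := hw
    have hT : 2 ≤ numComponents G ↑(insert u S) := by
      rw [Finset.coe_insert]
      exact two_le_numComponents_insert hu hv huv hnr huw hwS hwv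
    have hcard : ((insert u S).card : ℚ) = S.card + 1 := by
      rw [Finset.card_insert_of_notMem hu]
      push_cast
      rfl
    refine .inr ⟨insert u S, ?_, hT, Finset.mem_insert_self u S⟩
    exact le_antisymm (hcard ▸ hS) (hG.two_mul_le_card hT)
  · push Not at hw
    have hsub : G.neighborFinset u ⊆ insert v S := by
      intro w huw
      rw [mem_neighborFinset] at huw
      by_contra hwT
      rw [Finset.mem_insert, not_or] at hwT
      exact hwT.1 (hw w huw hwT.2)
    have hdeg : G.degree u ≤ S.card + 1 :=
      (Finset.card_le_card hsub).trans (Finset.card_insert_le v S)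
    exact .inl (le_trans (by exact_mod_cast hdeg) hS)

theorem min_good_cut_empty_D_general [Fintype V] (G : SimpleGraph V) [DecidableRel G.Adj]
    (t : ℚ) (ht : 0 < t) (h2t : ∃ k : ℤ, (k : ℚ) = 2 * t)
    (hmt : MinimallyTough G t) (u v : V)
    (S : Finset V) (hS : IsMinGoodCut G t u v S)
    (hD : Dset G ↑S u = ∅) :
    (∃ w : V, (G.degree w : ℚ) ≤ 2 * t) ∨
      (InTwoTCut G t u ∧ InTwoTCut G t v) := by
  obtain ⟨hgood, -⟩ := hS
  obtain ⟨hu, hv, huv, -⟩ := hgood.2.2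
  have hpre := preconnected_induce_compl_of_Dset_eq_empty hD
  have hcard := hgood.card_add_one_le_two_mul ht h2t (numComponents_deleteEdges_le_two hu hv hpre)
  have hnr := not_reachable_of_isBridgeIn hpre hgood.2.2
  have hnr' : ¬ ((G.deleteEdges {s(v, u)}).induce (↑S)ᶜ).Reachable ⟨v, hv⟩ ⟨u, hu⟩ := by
    rw [Sym2.eq_swap]
    exact fun h => hnr h.symm
  rcases degree_le_or_inTwoTCut hmt.1 hcard hu hv huv.ne hnr with hdu | hcu
  · exact .inl ⟨u, hdu⟩
  rcases degree_le_or_inTwoTCut hmt.1 hcard hv hu huv.ne.symm hnr' with hdv | hcv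
  · exact .inl ⟨v, hdv⟩
  exact .inr ⟨hcu, hcv⟩

/-- Let `t > 0` with `2t` an integer, `G` minimally `t`-tough, `e = uv` a
non-bridge edge of `G`, and `S = S(e)` a minimum good cut for `e`.  If
`G − S(e)` is connected (i.e. `D(e) = ∅`), then `δ(G) ≤ 2t` or each of `u`
and `v` is contained in a `2t`-vertex-cut of `G`. -/
theorem min_good_cut_empty_D [Fintype V] (G : SimpleGraph V) [DecidableRel G.Adj]
    (t : ℚ) (ht : 0 < t) (h2t : ∃ k : ℤ, (k : ℚ) = 2 * t)
    (hmt : MinimallyTough G t) (u v : V) (huv : G.Adj u v)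
    (hnb : ¬ IsBridgeIn G (∅ : Set V) u v)
    (S : Finset V) (hS : IsMinGoodCut G t u v S)
    (hD : Dset G ↑S u = ∅) :
    (∃ w : V, (G.degree w : ℚ) ≤ 2 * t) ∨
      (InTwoTCut G t u ∧ InTwoTCut G t v) :=
  min_good_cut_empty_D_general G t ht h2t hmt u v S hS hD
end

section
/- Let G be a minimally t-tough, claw-free graph and e = uv a non-bridge edge of G with D(e) ≠ ∅. If |S(e)| ≥ ⌈3t⌉, then for every component Cᵢ of G−S(e) other than C(e), |N_{S(e)}(C(e)) ∩ N_{S(e)}(Cᵢ)| ≤ 2t−1. -/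
open SimpleGraph

variable {V : Type*}

/-!
By Matthews–Sumner, in a claw-free graph `κ(G) · w(G − T) ≤ 2|T|` for every cut `T`, so the
toughness of a claw-free graph is `κ(G) / 2`. Deleting one edge creates at most one new
component, so the good cut `S` satisfies `|S| < t (w(G − S) + 1)`, and `|S| ≥ 3t` forces
`w(G − S) ≥ 3`. A common neighbour of `C(e)` and `Cᵢ` has, by claw-freeness, no neighbour in
any other component, so putting all of them back merges at most these two components and
`S ∖ W` is still a cut. Its toughness ratio gives `t (w(G − S) − 1) ≤ |S| − |W|`, hence
`|W| < 2t = κ(G)`, and `|W| ≤ 2t − 1` because `κ(G)` is an integer.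
-/

theorem Nat.card_le_card_add_one_of_injOn_compl_singleton {α β : Type*} [Finite α] [Finite β]
    {f : α → β} {c : α} (hf : Set.InjOn f {c}ᶜ) : Nat.card α ≤ Nat.card β + 1 := by
  have himage : ({c}ᶜ : Set α).ncard ≤ Nat.card β := hf.ncard_image ▸ Set.ncard_le_card _
  have := Set.ncard_add_ncard_compl {c}
  rw [Set.ncard_singleton] at this
  omega

namespace SimpleGraph

variable {α : Type*} {H : SimpleGraph α} {a b x y : α}

theorem Reachable.mem_of_forall_adj_mem {s : Set α} (hs : ∀ p ∈ s, ∀ q, H.Adj p q → q ∈ s)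
    (h : H.Reachable a b) (ha : a ∈ s) : b ∈ s := by
  obtain ⟨p⟩ := h
  induction p with
  | nil => exact ha
  | cons hadj _ ih => exact ih (hs _ ha _ hadj)

theorem Reachable.deleteEdges_of_not_reachable (h : H.Reachable a b)
    (ha : ¬ (H.deleteEdges {s(x, y)}).Reachable a y)
    (hb : ¬ (H.deleteEdges {s(x, y)}).Reachable b y) :
    (H.deleteEdges {s(x, y)}).Reachable a b := by
  classical
  obtain ⟨p⟩ := h
  exact reachable_deleteEdges_iff_exists_walk.2
    ⟨p.bypass, p.bypass_isPath.isTrail.not_mem_edges_of_not_reachable ha hb⟩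

theorem card_connectedComponent_deleteEdges_le [Finite α] (H : SimpleGraph α) (x y : α) :
    Nat.card (H.deleteEdges {s(x, y)}).ConnectedComponent ≤ Nat.card H.ConnectedComponent + 1 := by
  refine Nat.card_le_card_add_one_of_injOn_compl_singleton
    (f := ConnectedComponent.map (Hom.ofLE (deleteEdges_le _)))
    (c := (H.deleteEdges {s(x, y)}).connectedComponentMk y) ?_
  intro c₁ hc₁ c₂ hc₂ hmap
  induction c₁ using ConnectedComponent.ind with | h a => ?_
  induction c₂ using ConnectedComponent.ind with | h b => ?_
  simp only [Set.mem_compl_iff, Set.mem_singleton_iff, ConnectedComponent.eq] at hc₁ hc₂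
  simp only [ConnectedComponent.map_mk, ConnectedComponent.eq, Hom.coe_ofLE, id] at hmap
  exact ConnectedComponent.sound (hmap.deleteEdges_of_not_reachable hc₁ hc₂)

theorem induce_deleteEdges_singleton (G : SimpleGraph α) {s : Set α} (hx : x ∈ s) (hy : y ∈ s) :
    (G.deleteEdges {s(x, y)}).induce s = (G.induce s).deleteEdges {s(⟨x, hx⟩, ⟨y, hy⟩)} := by
  ext
  simp [Subtype.ext_iff]

end SimpleGraph

section Components

variable {G : SimpleGraph V} {S X : Set V} {a b c u v : V}

theorem mem_compOf_self (ha : a ∉ S) : a ∈ compOf G S a :=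
  ⟨ha, ha, Reachable.refl _⟩

theorem connectedComponentMk_eq_iff_mem_compOf (ha : a ∉ S) (hb : b ∉ S) :
    (G.induce Sᶜ).connectedComponentMk ⟨a, ha⟩ = (G.induce Sᶜ).connectedComponentMk ⟨b, hb⟩ ↔
      b ∈ compOf G S a :=
  ConnectedComponent.eq.trans ⟨fun h => ⟨ha, hb, h⟩, fun ⟨_, _, h⟩ => h⟩

theorem mem_compOf_symm (h : b ∈ compOf G S a) : a ∈ compOf G S b :=
  let ⟨ha, hb, hr⟩ := h
  ⟨hb, ha, hr.symm⟩

theorem mem_compOf_trans (hb : b ∈ compOf G S a) (hc : c ∈ compOf G S b) : c ∈ compOf G S a :=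
  let ⟨ha, _, hab⟩ := hb
  let ⟨_, hc, hbc⟩ := hc
  ⟨ha, hc, hab.trans hbc⟩

theorem mem_compOf_of_adj (hb : b ∈ compOf G S a) (hc : c ∉ S) (hbc : G.Adj b c) :
    c ∈ compOf G S a :=
  mem_compOf_trans hb ⟨hb.2.1, hc, (show (G.induce Sᶜ).Adj ⟨b, _⟩ ⟨c, hc⟩ from hbc).reachable⟩

theorem ne_and_not_adj_of_notMem_compOf (ha : a ∉ S) (hb : b ∉ S) (h : b ∉ compOf G S a) :
    a ≠ b ∧ ¬ G.Adj a b :=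
  ⟨by rintro rfl; exact h (mem_compOf_self ha),
    fun hab => h (mem_compOf_of_adj (mem_compOf_self ha) hb hab)⟩

theorem compOf_subset_compOf_of_nbrsIn_subset (ha : a ∉ S)
    (hX : nbrsIn G S (compOf G S a) ⊆ X) : compOf G X a ⊆ compOf G S a := by
  rintro w ⟨haX, hwX, hr⟩
  refine hr.mem_of_forall_adj_mem (s := {y : ↥Xᶜ | y.1 ∈ compOf G S a}) ?_ (mem_compOf_self ha)
  rintro p hp q hpq
  by_cases hqS : q.1 ∈ S
  · exact absurd (hX ⟨⟨hqS, fun hq => hq.2.1 hqS⟩, p, hp, hpq.symm⟩) q.2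
  · exact mem_compOf_of_adj hp hqS hpq

theorem one_le_numComponents [Finite V] (ha : a ∉ S) : 1 ≤ numComponents G S :=
  have : Nonempty (G.induce Sᶜ).ConnectedComponent := ⟨(G.induce Sᶜ).connectedComponentMk ⟨a, ha⟩⟩
  Nat.card_pos

theorem two_le_numComponents [Finite V] (ha : a ∉ S) (hb : b ∉ S) (hab : b ∉ compOf G S a) :
    2 ≤ numComponents G S :=
  Finite.one_lt_card_iff_nontrivial.mpr
    ⟨_, _, mt (connectedComponentMk_eq_iff_mem_compOf ha hb).mp hab⟩

theorem numComponents_deleteEdges_le [Finite V] (hu : u ∉ S) (hv : v ∉ S) :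
    numComponents (G.deleteEdges {s(u, v)}) S ≤ numComponents G S + 1 := by
  rw [numComponents, induce_deleteEdges_singleton G (s := Sᶜ) hu hv]
  exact card_connectedComponent_deleteEdges_le _ _ _

end Components

section ClawFree

variable {G : SimpleGraph V} {S : Set V} {a b p q r x : V}

theorem ClawFree.mem_compOf_or_mem_compOf (hcf : ClawFree G) (hp : p ∉ S) (hq : q ∉ S)
    (hr : r ∉ S) (hxp : G.Adj x p) (hxq : G.Adj x q) (hxr : G.Adj x r)
    (hpq : q ∉ compOf G S p) : r ∈ compOf G S p ∨ r ∈ compOf G S q := by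
  by_contra! h
  obtain ⟨hne_pq, hnadj_pq⟩ := ne_and_not_adj_of_notMem_compOf hp hq hpq
  obtain ⟨hne_pr, hnadj_pr⟩ := ne_and_not_adj_of_notMem_compOf hp hr h.1
  obtain ⟨hne_qr, hnadj_qr⟩ := ne_and_not_adj_of_notMem_compOf hq hr h.2
  exact hcf ⟨x, p, q, r, hne_pq, hne_pr, hne_qr, hxp, hxq, hxr, hnadj_pq, hnadj_pr, hnadj_qr⟩

theorem ClawFree.mem_compOf_union_of_mem_nbrsIn_inter {y : V} (hcf : ClawFree G)
    (hab : b ∉ compOf G S a)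
    (hx : x ∈ nbrsIn G S (compOf G S a) ∩ nbrsIn G S (compOf G S b)) (hy : y ∉ S)
    (hxy : G.Adj x y) : y ∈ compOf G S a ∪ compOf G S b := by
  obtain ⟨⟨-, a', ha', hxa'⟩, ⟨-, b', hb', hxb'⟩⟩ := hx
  have hab' : b' ∉ compOf G S a' := fun h =>
    hab (mem_compOf_trans (mem_compOf_trans ha' h) (mem_compOf_symm hb'))
  rcases hcf.mem_compOf_or_mem_compOf ha'.2.1 hb'.2.1 hy hxa' hxb' hxy hab' with h | h
  · exact Or.inl (mem_compOf_trans ha' h)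
  · exact Or.inr (mem_compOf_trans hb' h)

theorem numComponents_le_numComponents_sdiff_add_one [Finite V] {W : Set V} (hb : b ∉ S)
    (hW : ∀ x ∈ W, ∀ y ∉ S, G.Adj x y → y ∈ compOf G S a ∪ compOf G S b) :
    numComponents G S ≤ numComponents G (S \ W) + 1 := by
  have hsub : Sᶜ ⊆ (S \ W)ᶜ := fun x hx hxSW => hx hxSW.1
  have hsurvive : ∀ z ∉ S, z ∉ compOf G S a → z ∉ compOf G S b →
      compOf G (S \ W) z ⊆ compOf G S z := by
    intro z hz hza hzb
    refine compOf_subset_compOf_of_nbrsIn_subset hz ?_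
    rintro y ⟨⟨hyS, -⟩, p, hp, hyp⟩
    refine ⟨hyS, fun hyW => ?_⟩
    rcases hW y hyW p hp.2.1 hyp with hpa | hpb
    · exact hza (mem_compOf_trans hpa (mem_compOf_symm hp))
    · exact hzb (mem_compOf_trans hpb (mem_compOf_symm hp))
  refine Nat.card_le_card_add_one_of_injOn_compl_singleton
    (f := ConnectedComponent.map (G.induceHomOfLE hsub).toHom)
    (c := (G.induce Sᶜ).connectedComponentMk ⟨b, hb⟩) ?_
  intro c₁ hc₁ c₂ hc₂ hmap
  induction c₁ using ConnectedComponent.ind with | h x₁ => ?_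
  induction c₂ using ConnectedComponent.ind with | h x₂ => ?_
  obtain ⟨x₁, hx₁⟩ := x₁
  obtain ⟨x₂, hx₂⟩ := x₂
  simp only [Set.mem_compl_iff, Set.mem_singleton_iff] at hc₁ hc₂
  rw [eq_comm, connectedComponentMk_eq_iff_mem_compOf] at hc₁ hc₂
  rw [ConnectedComponent.map_mk, ConnectedComponent.map_mk,
    connectedComponentMk_eq_iff_mem_compOf] at hmap
  rw [connectedComponentMk_eq_iff_mem_compOf]
  by_cases h₁ : x₁ ∈ compOf G S a
  · by_cases h₂ : x₂ ∈ compOf G S a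
    · exact mem_compOf_trans (mem_compOf_symm h₁) h₂
    · exact mem_compOf_symm (hsurvive x₂ hx₂ h₂ hc₂ (mem_compOf_symm hmap))
  · exact hsurvive x₁ hx₁ h₁ hc₁ hmap

end ClawFree

section Toughness

variable [Fintype V] {G : SimpleGraph V} {t : ℚ} {u v : V} {S : Finset V}

theorem vconn_le_card_of_two_le_numComponents {T : Finset V} (h : 2 ≤ numComponents G T) :
    vconn G ≤ T.card :=
  Nat.sInf_le ⟨T, rfl, h⟩

open Finset in
/-- Matthews–Sumner: the neighbourhood of each component of `G − S₀` is a vertex cut, and by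
claw-freeness each vertex of `S₀` lies in at most two of these neighbourhoods. -/
theorem ClawFree.vconn_mul_numComponents_le (hcf : ClawFree G) {S₀ : Finset V}
    (h2 : 2 ≤ numComponents G S₀) : vconn G * numComponents G S₀ ≤ 2 * S₀.card := by
  classical
  set H := G.induce (↑S₀ : Set V)ᶜ
  have : Fintype H.ConnectedComponent := Fintype.ofFinite _
  let adjTo : H.ConnectedComponent → V → Prop :=
    fun c s => ∃ z, H.connectedComponentMk z = c ∧ G.Adj s z
  have hcut : ∀ c ∈ (univ : Finset H.ConnectedComponent),
      vconn G ≤ #(S₀.bipartiteAbove adjTo c) := by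
    intro c _
    induction c using ConnectedComponent.ind with | h z => ?_
    have : Nontrivial H.ConnectedComponent := Finite.one_lt_card_iff_nontrivial.mp h2
    obtain ⟨c', hc'⟩ := exists_ne (H.connectedComponentMk z)
    induction c' using ConnectedComponent.ind with | h z' => ?_
    have hsub : (↑(S₀.bipartiteAbove adjTo (H.connectedComponentMk z)) : Set V) ⊆ ↑S₀ :=
      coe_subset.mpr (filter_subset _ _)
    have hnbrs : nbrsIn G ↑S₀ (compOf G ↑S₀ z) ⊆
        ↑(S₀.bipartiteAbove adjTo (H.connectedComponentMk z)) := by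
      rintro s ⟨⟨hs, -⟩, y, hy, hsy⟩
      exact (mem_bipartiteAbove adjTo).mpr
        ⟨hs, ⟨y, hy.2.1⟩, ((connectedComponentMk_eq_iff_mem_compOf z.2 hy.2.1).mpr hy).symm, hsy⟩
    have hz' : z'.1 ∉ compOf G ↑S₀ z := fun h =>
      hc' ((connectedComponentMk_eq_iff_mem_compOf z.2 z'.2).mpr h).symm
    exact vconn_le_card_of_two_le_numComponents <| two_le_numComponents
      (fun h => z.2 (hsub h)) (fun h => z'.2 (hsub h))
      (fun h => hz' (compOf_subset_compOf_of_nbrsIn_subset z.2 hnbrs h))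
  have hclaw : ∀ s ∈ S₀, #(univ.bipartiteBelow adjTo s) ≤ 2 := by
    intro s _
    by_contra! h3
    obtain ⟨c₁, hc₁, c₂, hc₂, c₃, hc₃, h₁₂, h₁₃, h₂₃⟩ := two_lt_card.mp h3
    obtain ⟨-, z₁, rfl, hz₁⟩ := (mem_bipartiteBelow adjTo).mp hc₁
    obtain ⟨-, z₂, rfl, hz₂⟩ := (mem_bipartiteBelow adjTo).mp hc₂
    obtain ⟨-, z₃, rfl, hz₃⟩ := (mem_bipartiteBelow adjTo).mp hc₃
    have hcomp : ∀ {z z' : ↥(↑S₀ : Set V)ᶜ}, H.connectedComponentMk z ≠ H.connectedComponentMk z' →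
        z'.1 ∉ compOf G ↑S₀ z := fun {z z'} hne h =>
      hne ((connectedComponentMk_eq_iff_mem_compOf z.2 z'.2).mpr h)
    rcases hcf.mem_compOf_or_mem_compOf z₁.2 z₂.2 z₃.2 hz₁ hz₂ hz₃ (hcomp h₁₂) with h | h
    · exact hcomp h₁₃ h
    · exact hcomp h₂₃ h
  have := card_mul_le_card_mul adjTo hcut hclaw
  rw [card_univ, ← Nat.card_eq_fintype_card] at this
  change Nat.card H.ConnectedComponent * vconn G ≤ S₀.card * 2 at this
  unfold numComponents
  linarith

theorem HasToughness.two_mul_eq_vconn (ht : HasToughness G t) (hcf : ClawFree G) :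
    2 * t = vconn G := by
  obtain ⟨hle, S₀, h2₀, rfl⟩ := ht
  have hw₀ : (2 : ℚ) ≤ numComponents G S₀ := by exact_mod_cast h2₀
  apply le_antisymm
  · have hcuts : {k | ∃ T : Finset V, T.card = k ∧ 2 ≤ numComponents G ↑T}.Nonempty :=
      ⟨_, S₀, rfl, h2₀⟩
    obtain ⟨T, hTcard, hT2⟩ : ∃ T : Finset V, T.card = vconn G ∧ 2 ≤ numComponents G T :=
      Nat.sInf_mem hcuts
    have hwT : (2 : ℚ) ≤ numComponents G T := by exact_mod_cast hT2
    calc 2 * ((S₀.card : ℚ) / numComponents G S₀)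
        ≤ 2 * ((T.card : ℚ) / numComponents G T) := by linarith [hle T hT2]
      _ ≤ 2 * ((T.card : ℚ) / 2) := by gcongr
      _ = vconn G := by rw [hTcard]; ring
  · rw [mul_div_assoc', le_div_iff₀ (by linarith)]
    exact_mod_cast hcf.vconn_mul_numComponents_le h2₀

theorem GoodCut.pos (h : GoodCut G t u v S) : 0 < t := by
  obtain ⟨hw, -, hu, -⟩ := h
  have h1 : (1 : ℚ) ≤ numComponents G S := by exact_mod_cast one_le_numComponents hu
  by_contra! ht
  linarith [div_nonpos_of_nonneg_of_nonpos (Nat.cast_nonneg (α := ℚ) S.card) ht]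

theorem GoodCut.card_lt (h : GoodCut G t u v S) :
    (S.card : ℚ) < t * (numComponents G S + 1) := by
  have ht := h.pos
  obtain ⟨-, hlt, hu, hv, -⟩ := h
  have hdel : (numComponents (G.deleteEdges {s(u, v)}) S : ℚ) ≤ numComponents G S + 1 := by
    exact_mod_cast numComponents_deleteEdges_le hu hv
  rw [div_lt_iff₀ ht] at hlt
  nlinarith

theorem GoodCut.three_le_numComponents (h : GoodCut G t u v S) (h3 : 3 * t ≤ S.card) :
    3 ≤ numComponents G S := by
  have h3' : (3 : ℚ) < numComponents G S + 1 :=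
    lt_of_mul_lt_mul_left (by linarith [h.card_lt]) h.pos.le
  exact_mod_cast (show (2 : ℚ) < numComponents G S by linarith)

theorem GoodCut.card_lt_two_mul [DecidableEq V] (ht : HasToughness G t) (h : GoodCut G t u v S)
    (h3 : 3 ≤ numComponents G S) {W : Finset V} (hWS : W ⊆ S)
    (hmerge : numComponents G S ≤ numComponents G ↑(S \ W) + 1) : (W.card : ℚ) < 2 * t := by
  have htough := ht.1 (S \ W) (by omega)
  have hcard : ((S \ W).card : ℚ) = S.card - W.card := by
    rw [Finset.card_sdiff_of_subset hWS, Nat.cast_sub (Finset.card_le_card hWS)]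
  have hmerge' : (numComponents G S : ℚ) ≤ numComponents G ↑(S \ W) + 1 := by
    exact_mod_cast hmerge
  have hpos : (0 : ℚ) < numComponents G ↑(S \ W) := by
    exact_mod_cast (show 0 < numComponents G ↑(S \ W) by omega)
  rw [le_div_iff₀ hpos, hcard] at htough
  nlinarith [h.card_lt, h.pos]

end Toughness

theorem min_good_cut_common_neighbors_bound_general [Fintype V] (G : SimpleGraph V)
    (t : ℚ) (hmt : MinimallyTough G t) (hcf : ClawFree G)
    (u v : V) (S : Finset V) (hS : IsMinGoodCut G t u v S)
    (hk : (⌈3 * t⌉ : ℚ) ≤ (S.card : ℚ)) :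
    ∀ w ∈ Dset G ↑S u,
      (((nbrsIn G ↑S (compOf G ↑S u) ∩ nbrsIn G ↑S (compOf G ↑S w)).ncard : ℚ))
        ≤ 2 * t - 1 := by
  classical
  intro w ⟨hwS, hwu⟩
  set X := nbrsIn G ↑S (compOf G ↑S u) ∩ nbrsIn G ↑S (compOf G ↑S w)
  have hXW : X = ↑(S.filter (· ∈ X)) := by
    ext x
    simp only [Finset.coe_filter]
    exact ⟨fun hx => ⟨hx.1.1.1, hx⟩, And.right⟩
  have h3 := hS.1.three_le_numComponents ((Int.le_ceil _).trans hk)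
  have hmerge := numComponents_le_numComponents_sdiff_add_one (W := X) hwS
    fun x hx y hy hxy => hcf.mem_compOf_union_of_mem_nbrsIn_inter hwu hx hy hxy
  rw [hXW, ← Finset.coe_sdiff] at hmerge
  have hlt := hS.1.card_lt_two_mul hmt.1 h3 (Finset.filter_subset _ S) hmerge
  rw [hmt.1.two_mul_eq_vconn hcf] at hlt ⊢
  rw [hXW, Set.ncard_coe_finset]
  have hlt' : (S.filter (· ∈ X)).card < vconn G := by exact_mod_cast hlt
  rw [le_sub_iff_add_le]
  exact_mod_cast hlt'

/-- Let `G` be minimally `t`-tough and claw-free, `e = uv` a non-bridge edge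
with `D(e) ≠ ∅`.  If `|S(e)| ≥ ⌈3t⌉`, then for every component `Cᵢ` of
`G − S(e)` other than `C(e)` (i.e. the component of any `w ∈ D(e)`),
`|N_{S(e)}(C(e)) ∩ N_{S(e)}(Cᵢ)| ≤ 2t − 1`. -/
theorem min_good_cut_common_neighbors_bound [Fintype V] (G : SimpleGraph V)
    (t : ℚ) (hmt : MinimallyTough G t) (hcf : ClawFree G)
    (u v : V) (huv : G.Adj u v) (hnb : ¬ IsBridgeIn G (∅ : Set V) u v)
    (S : Finset V) (hS : IsMinGoodCut G t u v S)
    (hD : (Dset G ↑S u).Nonempty)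
    (hk : (⌈3 * t⌉ : ℚ) ≤ (S.card : ℚ)) :
    ∀ w ∈ Dset G ↑S u,
      (((nbrsIn G ↑S (compOf G ↑S u) ∩ nbrsIn G ↑S (compOf G ↑S w)).ncard : ℚ))
        ≤ 2 * t - 1 :=
  min_good_cut_common_neighbors_bound_general G t hmt hcf u v S hS hk
end

section
/- Let G be a minimally t-tough, claw-free graph and e = uv a non-bridge edge of G with D(e) ≠ ∅. If |N_{S(e)}(C(e))| = 4t−1, then every vertex of S(e) is contained in a 2t-vertex-cut of G. -/
open SimpleGraph

variable {V : Type*}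

namespace MGCAux

variable {G : SimpleGraph V}

/-- vertex set of a connected component of `G` induced on `K`. -/
def csupp (G : SimpleGraph V) (K : Set V) (c : (G.induce K).ConnectedComponent) : Set V :=
  {x | ∃ h : x ∈ K, (G.induce K).connectedComponentMk ⟨x, h⟩ = c}

lemma csupp_subset {K : Set V} {c : (G.induce K).ConnectedComponent} :
    csupp G K c ⊆ K := fun _ h => h.1

lemma mem_csupp_mk {K : Set V} (x : ↥K) :
    (x : V) ∈ csupp G K ((G.induce K).connectedComponentMk x) := ⟨x.2, rfl⟩

lemma csupp_eq_of_mem {K : Set V} {c c' : (G.induce K).ConnectedComponent} {x : V}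
    (h : x ∈ csupp G K c) (h' : x ∈ csupp G K c') : c = c' := by
  obtain ⟨h1, e1⟩ := h; obtain ⟨h2, e2⟩ := h'
  rw [← e1, ← e2]

lemma csupp_adj {K : Set V} {c : (G.induce K).ConnectedComponent} {x y : V}
    (hx : x ∈ csupp G K c) (hy : y ∈ K) (hadj : G.Adj x y) : y ∈ csupp G K c := by
  obtain ⟨h1, e1⟩ := hx
  refine ⟨hy, ?_⟩
  rw [← e1]
  exact ConnectedComponent.connectedComponentMk_eq_of_adj (by simpa using hadj.symm)

/-- walks in an induced subgraph stay in a "closed" region. -/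
lemma confine {K : Set V} {R : Set V}
    (hR : ∀ a ∈ R, ∀ b, G.Adj a b → b ∈ K → b ∈ R)
    {x y : ↥K} (h : (G.induce K).Reachable x y) (hx : (x : V) ∈ R) : (y : V) ∈ R := by
  obtain ⟨p⟩ := h
  induction p with
  | nil => exact hx
  | @cons a b c hadj q ih =>
      exact ih (hR _ hx _ (by simpa using hadj) b.2)
lemma two_le_numComponents [Fintype V] {T : Set V} {x y : V} (hx : x ∈ Tᶜ) (hy : y ∈ Tᶜ)
    (h : ¬ (G.induce Tᶜ).Reachable ⟨x, hx⟩ ⟨y, hy⟩) : 2 ≤ numComponents G T := by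
  have hne : (G.induce Tᶜ).connectedComponentMk ⟨x, hx⟩ ≠
      (G.induce Tᶜ).connectedComponentMk ⟨y, hy⟩ :=
    fun he => h (ConnectedComponent.exact he)
  have hnt : Nontrivial ((G.induce Tᶜ).ConnectedComponent) := ⟨_, _, hne⟩
  have hfin : Finite ((G.induce Tᶜ).ConnectedComponent) := Quot.finite _
  haveI := Fintype.ofFinite ((G.induce Tᶜ).ConnectedComponent)
  rw [numComponents, Nat.card_eq_fintype_card]
  exact Fintype.one_lt_card_iff_nontrivial.mpr hnt

/-- the set of vertices of `S` adjacent to component `c` of `G − S`. -/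
noncomputable def NT (G : SimpleGraph V) (S : Finset V)
    (c : (G.induce (↑S : Set V)ᶜ).ConnectedComponent) : Finset V :=
  @Finset.filter V (fun s => ∃ x ∈ csupp G (↑S : Set V)ᶜ c, G.Adj s x)
    (Classical.decPred _) S

lemma mem_NT {S : Finset V} {c : (G.induce (↑S : Set V)ᶜ).ConnectedComponent} {a : V} :
    a ∈ NT G S c ↔ a ∈ S ∧ ∃ x ∈ csupp G (↑S : Set V)ᶜ c, G.Adj a x := by
  unfold NT
  exact @Finset.mem_filter _ _ (Classical.decPred _) _ _

/-- removing `NT G S c` separates `c` from any other component. -/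
lemma cut_separates [Fintype V] (G : SimpleGraph V) (S : Finset V)
    {c c' : (G.induce (↑S : Set V)ᶜ).ConnectedComponent} (hne : c ≠ c') {x y : V}
    (hx : x ∈ csupp G (↑S : Set V)ᶜ c) (hy : y ∈ csupp G (↑S : Set V)ᶜ c') :
    2 ≤ numComponents G ↑(NT G S c) := by
  have hTS : ∀ a : V, a ∈ NT G S c → a ∈ S := fun a ha => (mem_NT.mp ha).1
  have hxT : x ∈ (↑(NT G S c) : Set V)ᶜ := fun hmem => (csupp_subset hx) (by
    simpa using hTS x (by simpa using hmem))
  have hyT : y ∈ (↑(NT G S c) : Set V)ᶜ := fun hmem => (csupp_subset hy) (by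
    simpa using hTS y (by simpa using hmem))
  refine two_le_numComponents hxT hyT (fun hreach => ?_)
  have hclosed : ∀ a ∈ csupp G (↑S : Set V)ᶜ c, ∀ b, G.Adj a b →
      b ∈ (↑(NT G S c) : Set V)ᶜ → b ∈ csupp G (↑S : Set V)ᶜ c := by
    intro a ha b hadj hbT
    by_cases hbS : b ∈ S
    · exact absurd (by exact_mod_cast mem_NT.mpr ⟨hbS, a, ha, hadj.symm⟩) hbT
    · exact csupp_adj ha (by simpa using hbS) hadj
  have : y ∈ csupp G (↑S : Set V)ᶜ c := confine hclosed hreach hx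
  exact hne (csupp_eq_of_mem this hy)

lemma cut_ge {t : ℚ} [Fintype V]
    (htough : ∀ S : Finset V, 2 ≤ numComponents G ↑S →
      t ≤ (S.card : ℚ) / (numComponents G ↑S : ℚ))
    (ht0 : 0 ≤ t) {T : Finset V} (h2 : 2 ≤ numComponents G ↑T) :
    2 * t ≤ (T.card : ℚ) := by
  have h := htough T h2
  have hw : (2 : ℚ) ≤ (numComponents G ↑T : ℚ) := by exact_mod_cast h2
  have hwpos : (0 : ℚ) < (numComponents G ↑T : ℚ) := by linarith
  rw [le_div_iff₀ hwpos] at h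
  nlinarith

lemma comps_adj_le_two (hcf : _root_.ClawFree G) (S : Finset V) (s : V)
    [Fintype ((G.induce (↑S : Set V)ᶜ).ConnectedComponent)] :
    (@Finset.filter ((G.induce (↑S : Set V)ᶜ).ConnectedComponent)
      (fun c => ∃ x ∈ csupp G (↑S : Set V)ᶜ c, G.Adj s x)
      (Classical.decPred _) Finset.univ).card ≤ 2 := by
  by_contra hlt
  push_neg at hlt
  obtain ⟨c1, c2, c3, hm1, hm2, hm3, h12, h13, h23⟩ := Finset.two_lt_card_iff.mp hlt
  have get : ∀ c, c ∈ (@Finset.filter ((G.induce (↑S : Set V)ᶜ).ConnectedComponent)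
      (fun c => ∃ x ∈ csupp G (↑S : Set V)ᶜ c, G.Adj s x)
      (Classical.decPred _) Finset.univ) → ∃ x ∈ csupp G (↑S : Set V)ᶜ c, G.Adj s x := by
    intro c hc
    exact (@Finset.mem_filter _ _ (Classical.decPred _) _ _).mp hc |>.2
  obtain ⟨x1, hx1, ha1⟩ := get c1 hm1
  obtain ⟨x2, hx2, ha2⟩ := get c2 hm2
  obtain ⟨x3, hx3, ha3⟩ := get c3 hm3
  have hne : ∀ {ca cb : (G.induce (↑S : Set V)ᶜ).ConnectedComponent} {xa xb : V},
      ca ≠ cb → xa ∈ csupp G (↑S : Set V)ᶜ ca → xb ∈ csupp G (↑S : Set V)ᶜ cb →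
      xa ≠ xb ∧ ¬ G.Adj xa xb := by
    intro ca cb xa xb hcab hxa hxb
    constructor
    · rintro rfl; exact hcab (csupp_eq_of_mem hxa hxb)
    · intro hadj; exact hcab (csupp_eq_of_mem hxa (csupp_adj hxb (csupp_subset hxa) hadj.symm))
  obtain ⟨hd12, hn12⟩ := hne h12 hx1 hx2
  obtain ⟨hd13, hn13⟩ := hne h13 hx1 hx3
  obtain ⟨hd23, hn23⟩ := hne h23 hx2 hx3
  exact hcf ⟨s, x1, x2, x3, hd12, hd13, hd23, ha1, ha2, ha3, hn12, hn13, hn23⟩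

lemma sum_filter_card_comm {α β : Type*} [Fintype α] (T : Finset β) (P : α → β → Prop) :
    ∑ c : α, (@Finset.filter β (P c) (Classical.decPred _) T).card
      = ∑ s ∈ T, (@Finset.filter α (fun c => P c s) (Classical.decPred _) Finset.univ).card := by
  classical
  have h1 : ∀ c : α, (@Finset.filter β (P c) (Classical.decPred _) T).card
      = ∑ s ∈ T, if P c s then 1 else 0 := fun c =>
    @Finset.card_filter β (P c) (Classical.decPred _) T
  have h2 : ∀ s : β, (@Finset.filter α (fun c => P c s) (Classical.decPred _) Finset.univ).card
      = ∑ c : α, if P c s then 1 else 0 := fun s =>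
    @Finset.card_filter α (fun c => P c s) (Classical.decPred _) Finset.univ
  simp only [h1, h2]
  exact Finset.sum_comm

lemma reach_split_aux {K : Set V} (u v : ↥K) {x y : ↥K}
    (p : (G.induce K).Walk x y) :
    ((G.deleteEdges {s((u : V), (v : V))}).induce K).Reachable x y ∨
    (((G.deleteEdges {s((u : V), (v : V))}).induce K).Reachable x u ∧
      ((G.deleteEdges {s((u : V), (v : V))}).induce K).Reachable v y) ∨
    (((G.deleteEdges {s((u : V), (v : V))}).induce K).Reachable x v ∧
      ((G.deleteEdges {s((u : V), (v : V))}).induce K).Reachable u y) := by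
  set Ge := (G.deleteEdges {s((u : V), (v : V))}).induce K with hGe
  induction p with
  | nil => exact Or.inl (Reachable.refl _)
  | @cons a b c hadj q ih =>
      have hG : G.Adj (a : V) (b : V) := by simpa using hadj
      by_cases he : s((a : V), (b : V)) = s((u : V), (v : V))
      · rcases Sym2.eq_iff.mp he with ⟨h1, h2⟩ | ⟨h1, h2⟩
        · have ha : a = u := Subtype.ext h1
          have hb : b = v := Subtype.ext h2
          subst ha; subst hb
          rcases ih with h | ⟨h1', h2'⟩ | ⟨h1', h2'⟩
          · exact Or.inr (Or.inl ⟨Reachable.refl _, h⟩)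
          · exact Or.inl (h1'.symm.trans h2')
          · exact Or.inl h2'
        · have ha : a = v := Subtype.ext h1
          have hb : b = u := Subtype.ext h2
          subst ha; subst hb
          rcases ih with h | ⟨h1', h2'⟩ | ⟨h1', h2'⟩
          · exact Or.inr (Or.inr ⟨Reachable.refl _, h⟩)
          · exact Or.inl h2'
          · exact Or.inl (h1'.symm.trans h2')
      · have hadj' : Ge.Adj a b := by
          rw [hGe]
          simp only [comap_adj, Function.Embedding.coe_subtype, deleteEdges_adj,
            Set.mem_singleton_iff]
          exact ⟨hG, he⟩
        rcases ih with h | ⟨h1', h2'⟩ | ⟨h1', h2'⟩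
        · exact Or.inl (hadj'.reachable.trans h)
        · exact Or.inr (Or.inl ⟨hadj'.reachable.trans h1', h2'⟩)
        · exact Or.inr (Or.inr ⟨hadj'.reachable.trans h1', h2'⟩)

lemma numComponents_deleteEdges_le [Fintype V] (G : SimpleGraph V) {S : Set V} {u v : V}
    (hu : u ∈ Sᶜ) (hv : v ∈ Sᶜ) :
    numComponents (G.deleteEdges {s(u, v)}) S ≤ numComponents G S + 1 := by
  classical
  set Ge := G.deleteEdges {s(u, v)} with hGe
  have hle : ∀ a b : ↥Sᶜ, (Ge.induce Sᶜ).Adj a b → (G.induce Sᶜ).Adj a b := by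
    intro a b h
    simp only [hGe, comap_adj, Function.Embedding.coe_subtype, deleteEdges_adj] at h ⊢
    exact h.1
  let hom : (Ge.induce Sᶜ) →g (G.induce Sᶜ) := ⟨id, fun {a b} h => hle a b h⟩
  have homid : ∀ a : ↥Sᶜ, hom a = a := fun _ => rfl
  let mkv := (Ge.induce Sᶜ).connectedComponentMk ⟨v, hv⟩
  let g : (Ge.induce Sᶜ).ConnectedComponent →
      ((G.induce Sᶜ).ConnectedComponent ⊕ Unit) :=
    fun c => if c = mkv then Sum.inr () else Sum.inl (c.map hom)
  have hginj : Function.Injective g := by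
    intro c1 c2
    refine ConnectedComponent.ind₂ (fun x1 x2 h => ?_) c1 c2
    by_cases hc1 : (Ge.induce Sᶜ).connectedComponentMk x1 = mkv <;>
      by_cases hc2 : (Ge.induce Sᶜ).connectedComponentMk x2 = mkv
    · rw [hc1, hc2]
    · simp only [g, if_pos hc1, if_neg hc2] at h
      exact absurd h (by simp)
    · simp only [g, if_neg hc1, if_pos hc2] at h
      exact absurd h (by simp)
    · simp only [g, if_neg hc1, if_neg hc2, ConnectedComponent.map_mk] at h
      have h' := Sum.inl.inj h
      have hreach : (G.induce Sᶜ).Reachable (hom x1) (hom x2) :=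
        ConnectedComponent.exact h'
      rw [homid, homid] at hreach
      obtain ⟨p⟩ := hreach
      have hsplit := reach_split_aux (G := G) (K := Sᶜ) ⟨u, hu⟩ ⟨v, hv⟩ p
      rcases hsplit with h | ⟨h1', h2'⟩ | ⟨h1', h2'⟩
      · exact ConnectedComponent.sound h
      · exact absurd (ConnectedComponent.sound h2'.symm) hc2
      · exact absurd (ConnectedComponent.sound h1') hc1
  have hfin : Finite ((G.induce Sᶜ).ConnectedComponent) := Quot.finite _
  calc numComponents Ge S = Nat.card ((Ge.induce Sᶜ).ConnectedComponent) := rfl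
    _ ≤ Nat.card ((G.induce Sᶜ).ConnectedComponent ⊕ Unit) :=
        Nat.card_le_card_of_injective g hginj
    _ = numComponents G S + 1 := by
        rw [Nat.card_sum, show Nat.card Unit = 1 from Nat.card_unique]
        rfl

lemma mem_csupp_of_quot {K : Set V} {c : (G.induce K).ConnectedComponent} (x : ↥K)
    (hx : (G.induce K).connectedComponentMk x = c) : (x : V) ∈ csupp G K c :=
  hx ▸ mem_csupp_mk x

lemma exists_two_t_nat [Fintype V] {t : ℚ} (hcf : _root_.ClawFree G)
    (htough : ∀ S : Finset V, 2 ≤ numComponents G ↑S →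
      t ≤ (S.card : ℚ) / (numComponents G ↑S : ℚ))
    (hex : ∃ S : Finset V, 2 ≤ numComponents G ↑S ∧
      t = (S.card : ℚ) / (numComponents G ↑S : ℚ))
    (ht0 : 0 ≤ t) :
    ∃ k : ℕ, (k : ℚ) = 2 * t := by
  classical
  obtain ⟨S₀, hw2, ht⟩ := hex
  set Γ := (G.induce (↑S₀ : Set V)ᶜ).ConnectedComponent with hΓ
  haveI : Finite Γ := Quot.finite _
  haveI : Fintype Γ := Fintype.ofFinite _
  have hwq : numComponents G ↑S₀ = Fintype.card Γ := Nat.card_eq_fintype_card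
  have hrep : ∀ c : Γ, ∃ x : V, x ∈ csupp G (↑S₀ : Set V)ᶜ c := by
    intro c
    obtain ⟨x, hx⟩ := Quot.exists_rep c
    exact ⟨(x : V), mem_csupp_of_quot x hx⟩
  have hge : ∀ c : Γ, 2 * t ≤ ((NT G S₀ c).card : ℚ) := by
    intro c
    have hnt : Nontrivial Γ := Fintype.one_lt_card_iff_nontrivial.mp (by rw [← hwq]; omega)
    obtain ⟨c', hc'⟩ := exists_ne c
    obtain ⟨x, hx⟩ := hrep c
    obtain ⟨x', hx'⟩ := hrep c'
    exact cut_ge htough ht0 (cut_separates G S₀ (Ne.symm hc') hx hx')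
  have hsum : ∑ c : Γ, (NT G S₀ c).card ≤ 2 * S₀.card := by
    have := sum_filter_card_comm (α := Γ) S₀
      (fun c s => ∃ x ∈ csupp G (↑S₀ : Set V)ᶜ c, G.Adj s x)
    rw [show (∑ c : Γ, (NT G S₀ c).card) = _ from this]
    calc ∑ s ∈ S₀, (@Finset.filter Γ
          (fun c => ∃ x ∈ csupp G (↑S₀ : Set V)ᶜ c, G.Adj s x)
          (Classical.decPred _) Finset.univ).card
        ≤ ∑ _s ∈ S₀, 2 := Finset.sum_le_sum (fun s _ => comps_adj_le_two hcf S₀ s)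
      _ = 2 * S₀.card := by rw [Finset.sum_const, smul_eq_mul, Nat.mul_comm]
  have hwpos : (0 : ℚ) < (numComponents G ↑S₀ : ℚ) := by
    have : (2 : ℚ) ≤ (numComponents G ↑S₀ : ℚ) := by exact_mod_cast hw2
    linarith
  have htw : t * (numComponents G ↑S₀ : ℚ) = (S₀.card : ℚ) := by
    rw [ht]; field_simp
  haveI : Nonempty Γ := Fintype.card_pos_iff.mp (by rw [← hwq]; omega)
  set c₀ := Classical.arbitrary Γ with hc₀
  refine ⟨(NT G S₀ c₀).card, le_antisymm ?_ (hge c₀)⟩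
  -- upper bound: card c₀ ≤ 2t
  have hsplit : (NT G S₀ c₀).card + ∑ c ∈ Finset.univ.erase c₀, (NT G S₀ c).card
      = ∑ c : Γ, (NT G S₀ c).card :=
    Finset.add_sum_erase Finset.univ (fun c => (NT G S₀ c).card) (Finset.mem_univ c₀)
  have herase : ∀ c ∈ Finset.univ.erase c₀, 2 * t ≤ ((NT G S₀ c).card : ℚ) :=
    fun c _ => hge c
  have hcarderase : (Finset.univ.erase c₀).card = Fintype.card Γ - 1 := by
    rw [Finset.card_erase_of_mem (Finset.mem_univ c₀), Finset.card_univ]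
  have hlow : ((Fintype.card Γ - 1 : ℕ) : ℚ) * (2 * t)
      ≤ ∑ c ∈ Finset.univ.erase c₀, ((NT G S₀ c).card : ℚ) := by
    have := Finset.card_nsmul_le_sum (Finset.univ.erase c₀)
      (fun c => ((NT G S₀ c).card : ℚ)) (2 * t) herase
    rwa [hcarderase, nsmul_eq_mul] at this
  have hcard1 : 1 ≤ Fintype.card Γ := by rw [← hwq]; omega
  have hcastw : ((Fintype.card Γ - 1 : ℕ) : ℚ) = (numComponents G ↑S₀ : ℚ) - 1 := by
    rw [hwq]; push_cast [Nat.cast_sub hcard1]; ring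
  have hsumq : ((NT G S₀ c₀).card : ℚ) + ∑ c ∈ Finset.univ.erase c₀, ((NT G S₀ c).card : ℚ)
      ≤ 2 * (S₀.card : ℚ) := by
    have h1 : (((NT G S₀ c₀).card + ∑ c ∈ Finset.univ.erase c₀, (NT G S₀ c).card : ℕ) : ℚ)
        ≤ ((2 * S₀.card : ℕ) : ℚ) := by exact_mod_cast hsplit ▸ hsum
    push_cast at h1
    exact h1
  rw [hcastw] at hlow
  nlinarith [hlow, hsumq, htw]

end MGCAux

open MGCAux in
/-- Let `G` be minimally `t`-tough and claw-free, `e = uv` a non-bridge edge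
with `D(e) ≠ ∅`.  If `|N_{S(e)}(C(e))| = 4t − 1`, then every vertex of `S(e)`
is contained in a `2t`-vertex-cut of `G`. -/
theorem min_good_cut_neighbors_4t_sub_one [Fintype V] (G : SimpleGraph V)
    (t : ℚ) (hmt : MinimallyTough G t) (hcf : ClawFree G)
    (u v : V) (huv : G.Adj u v) (hnb : ¬ IsBridgeIn G (∅ : Set V) u v)
    (S : Finset V) (hS : IsMinGoodCut G t u v S)
    (hD : (Dset G ↑S u).Nonempty)
    (hN : ((nbrsIn G ↑S (compOf G ↑S u)).ncard : ℚ) = 4 * t - 1) :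
    ∀ x ∈ S, InTwoTCut G t x := by
  classical
  intro x hx
  obtain ⟨⟨htough, hex⟩, _hmt2⟩ := hmt
  -- positivity of t
  have ht4 : (0 : ℚ) ≤ 4 * t - 1 := by
    rw [← hN]; exact Nat.cast_nonneg _
  have ht0 : (0 : ℚ) < t := by linarith
  -- 2t is a natural number k
  obtain ⟨k, hk⟩ := exists_two_t_nat hcf htough hex ht0.le
  obtain ⟨⟨hg1, hg2, hbr⟩, _hmin⟩ := hS
  obtain ⟨hu, hv, _hadj, hlt⟩ := hbr
  have huK : u ∈ (↑S : Set V)ᶜ := hu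
  have hvK : v ∈ (↑S : Set V)ᶜ := hv
  set Γ := (G.induce (↑S : Set V)ᶜ).ConnectedComponent with hΓdef
  haveI : Finite Γ := Quot.finite _
  haveI : Fintype Γ := Fintype.ofFinite _
  set w := numComponents G ↑S with hwdef
  have hwq : w = Fintype.card Γ := Nat.card_eq_fintype_card
  -- deleting one edge adds at most one component
  have hw'le : numComponents (G.deleteEdges {s(u, v)}) ↑S ≤ w + 1 :=
    numComponents_deleteEdges_le G huK hvK
  have hq2 : (S.card : ℚ) < t * ((w : ℚ) + 1) := by
    have hcast : ((numComponents (G.deleteEdges {s(u, v)}) ↑S : ℕ) : ℚ) ≤ (w : ℚ) + 1 := by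
      exact_mod_cast hw'le
    have h2 : (S.card : ℚ) / t < (w : ℚ) + 1 := lt_of_lt_of_le hg2 hcast
    rw [div_lt_iff₀ ht0] at h2
    linarith [h2]
  set cu := (G.induce (↑S : Set V)ᶜ).connectedComponentMk ⟨u, huK⟩ with hcudef
  -- the component of u is the csupp of cu
  have hcompOf : compOf G ↑S u = csupp G (↑S : Set V)ᶜ cu := by
    ext z
    constructor
    · rintro ⟨hu', hz, hr⟩
      exact ⟨hz, ConnectedComponent.sound hr.symm⟩
    · rintro ⟨hz, hmk⟩
      exact ⟨huK, hz, (ConnectedComponent.exact hmk).symm⟩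
  have hNT : nbrsIn G ↑S (compOf G ↑S u) = ↑(NT G S cu) := by
    ext z
    simp only [nbrsIn, Set.mem_setOf_eq, Set.mem_diff, Finset.coe_filter, Finset.mem_coe]
    rw [mem_NT]
    constructor
    · rintro ⟨⟨hzS, _hzC⟩, y, hyC, hadj⟩
      exact ⟨by exact_mod_cast hzS, y, hcompOf ▸ hyC, hadj⟩
    · rintro ⟨hzS, y, hy, hadj⟩
      refine ⟨⟨by exact_mod_cast hzS, fun hzC => ?_⟩, y, hcompOf ▸ hy, hadj⟩
      obtain ⟨_, hzK, _⟩ := hzC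
      exact hzK (by exact_mod_cast hzS)
  have hNcard : ((NT G S cu).card : ℚ) = 2 * (k : ℚ) - 1 := by
    rw [← Set.ncard_coe_finset, ← hNT, hN]
    linarith [hk]
  have hrep : ∀ c : Γ, ∃ z : V, z ∈ csupp G (↑S : Set V)ᶜ c := by
    intro c
    obtain ⟨z, hz⟩ := Quot.exists_rep c
    exact ⟨(z : V), mem_csupp_of_quot z hz⟩
  have hucu : u ∈ csupp G (↑S : Set V)ᶜ cu := mem_csupp_mk ⟨u, huK⟩
  -- lower bound for other components
  have hgeK : ∀ c : Γ, c ≠ cu → (k : ℚ) ≤ ((NT G S c).card : ℚ) := by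
    intro c hne
    obtain ⟨z, hz⟩ := hrep c
    have := cut_ge htough ht0.le (cut_separates G S hne hz hucu)
    linarith [hk]
  -- double counting
  set m : V → ℕ := fun s => (@Finset.filter Γ
      (fun c => ∃ z ∈ csupp G (↑S : Set V)ᶜ c, G.Adj s z)
      (Classical.decPred _) Finset.univ).card with hmdef
  have hsumeq : ∑ c : Γ, (NT G S c).card = ∑ s ∈ S, m s := by
    simp only [NT, hmdef]
    exact sum_filter_card_comm S _
  have hm2 : ∀ s : V, m s ≤ 2 := fun s => comps_adj_le_two hcf S s
  -- lower bound on the total sum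
  have hcard1 : 1 ≤ Fintype.card Γ := by
    have : Nonempty Γ := ⟨cu⟩
    exact Fintype.card_pos_iff.mpr this
  have hsumlow : (2 * (k : ℚ) - 1) + (k : ℚ) * ((w : ℚ) - 1)
      ≤ ((∑ c : Γ, (NT G S c).card : ℕ) : ℚ) := by
    have hsplit : (NT G S cu).card + ∑ c ∈ Finset.univ.erase cu, (NT G S c).card
        = ∑ c : Γ, (NT G S c).card :=
      Finset.add_sum_erase Finset.univ (fun c => (NT G S c).card) (Finset.mem_univ cu)
    have herase : ∀ c ∈ Finset.univ.erase cu, (k : ℚ) ≤ ((NT G S c).card : ℚ) :=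
      fun c hc => hgeK c (Finset.ne_of_mem_erase hc)
    have hlow := Finset.card_nsmul_le_sum (Finset.univ.erase cu)
      (fun c => ((NT G S c).card : ℚ)) (k : ℚ) herase
    rw [Finset.card_erase_of_mem (Finset.mem_univ cu), Finset.card_univ, nsmul_eq_mul] at hlow
    have hcaste : (((Fintype.card Γ) - 1 : ℕ) : ℚ) = (w : ℚ) - 1 := by
      rw [hwq]; push_cast [Nat.cast_sub hcard1]; ring
    rw [hcaste] at hlow
    have : ((∑ c : Γ, (NT G S c).card : ℕ) : ℚ)
        = ((NT G S cu).card : ℚ) + ∑ c ∈ Finset.univ.erase cu, ((NT G S c).card : ℚ) := by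
      rw [← hsplit]; push_cast; ring
    rw [this, hNcard]
    linarith [hlow]
  -- upper bound via m and x
  have h2S : ((∑ c : Γ, (NT G S c).card : ℕ) : ℚ) ≤ ((m x : ℕ) : ℚ) + 2 * ((S.card : ℚ) - 1) := by
    have hsplit : m x + ∑ s ∈ S.erase x, m s = ∑ s ∈ S, m s :=
      Finset.add_sum_erase S m hx
    have hup : ∑ s ∈ S.erase x, m s ≤ 2 * (S.card - 1) := by
      calc ∑ s ∈ S.erase x, m s ≤ ∑ _s ∈ S.erase x, 2 :=
            Finset.sum_le_sum (fun s _ => hm2 s)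
        _ = 2 * (S.card - 1) := by
            rw [Finset.sum_const, smul_eq_mul, Finset.card_erase_of_mem hx, Nat.mul_comm]
    have hx1 : 1 ≤ S.card := Finset.card_pos.mpr ⟨x, hx⟩
    have : ∑ s ∈ S, m s ≤ m x + 2 * (S.card - 1) := by omega
    have hcast := hsumeq ▸ this
    calc ((∑ c : Γ, (NT G S c).card : ℕ) : ℚ) ≤ ((m x + 2 * (S.card - 1) : ℕ) : ℚ) := by
          exact_mod_cast hcast
      _ = ((m x : ℕ) : ℚ) + 2 * ((S.card : ℚ) - 1) := by
          push_cast [Nat.cast_sub hx1]; ring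
  have hkw : 2 * (S.card : ℚ) < (k : ℚ) * ((w : ℚ) + 1) := by
    calc 2 * (S.card : ℚ) < 2 * (t * ((w : ℚ) + 1)) := by linarith [hq2]
      _ = (k : ℚ) * ((w : ℚ) + 1) := by
          rw [show 2 * (t * ((w : ℚ) + 1)) = (2 * t) * ((w : ℚ) + 1) from by ring, ← hk]
  -- m x ≥ 2
  have hmx2 : 2 ≤ m x := by
    by_contra hc
    push_neg at hc
    have : ((m x : ℕ) : ℚ) ≤ 1 := by exact_mod_cast Nat.lt_succ_iff.mp hc
    linarith [hsumlow, h2S, hkw]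
  -- get a component c ≠ cu adjacent to x
  obtain ⟨c1, hc1, c2, hc2, hc12⟩ := Finset.one_lt_card.mp (show 1 < m x by omega)
  have getP : ∀ c : Γ, c ∈ (@Finset.filter Γ
      (fun c => ∃ z ∈ csupp G (↑S : Set V)ᶜ c, G.Adj x z)
      (Classical.decPred _) Finset.univ) → ∃ z ∈ csupp G (↑S : Set V)ᶜ c, G.Adj x z :=
    fun c hc => ((@Finset.mem_filter _ _ (Classical.decPred _) _ _).mp hc).2
  obtain ⟨c, hcc, hPc⟩ : ∃ c : Γ, c ≠ cu ∧ ∃ z ∈ csupp G (↑S : Set V)ᶜ c, G.Adj x z := by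
    by_cases h1 : c1 = cu
    · exact ⟨c2, by rw [← h1]; exact (Ne.symm hc12), getP c2 hc2⟩
    · exact ⟨c1, h1, getP c1 hc1⟩
  -- component c has exactly k neighbours in S
  have hwge2 : 2 ≤ Fintype.card Γ :=
    Fintype.one_lt_card_iff_nontrivial.mpr ⟨c, cu, hcc⟩
  have hup : ((NT G S c).card : ℚ) < (k : ℚ) + 1 := by
    have hcmem : c ∈ Finset.univ.erase cu := Finset.mem_erase.mpr ⟨hcc, Finset.mem_univ c⟩
    have hsplit1 : (NT G S cu).card + ∑ c' ∈ Finset.univ.erase cu, (NT G S c').card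
        = ∑ c' : Γ, (NT G S c').card :=
      Finset.add_sum_erase Finset.univ (fun c' => (NT G S c').card) (Finset.mem_univ cu)
    have hsplit2 : (NT G S c).card + ∑ c' ∈ (Finset.univ.erase cu).erase c, (NT G S c').card
        = ∑ c' ∈ Finset.univ.erase cu, (NT G S c').card :=
      Finset.add_sum_erase _ (fun c' => (NT G S c').card) hcmem
    have herase : ∀ c' ∈ (Finset.univ.erase cu).erase c, (k : ℚ) ≤ ((NT G S c').card : ℚ) :=
      fun c' hc' => hgeK c' (Finset.ne_of_mem_erase (Finset.mem_of_mem_erase hc'))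
    have hlow := Finset.card_nsmul_le_sum ((Finset.univ.erase cu).erase c)
      (fun c' => ((NT G S c').card : ℚ)) (k : ℚ) herase
    rw [Finset.card_erase_of_mem hcmem, Finset.card_erase_of_mem (Finset.mem_univ cu),
      Finset.card_univ, nsmul_eq_mul] at hlow
    have hcaste : (((Fintype.card Γ) - 1 - 1 : ℕ) : ℚ) = (w : ℚ) - 2 := by
      rw [hwq]; push_cast [Nat.cast_sub (by omega : 1 ≤ Fintype.card Γ - 1),
        Nat.cast_sub (by omega : 1 ≤ Fintype.card Γ)]; ring
    rw [hcaste] at hlow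
    have htot : ((∑ c' : Γ, (NT G S c').card : ℕ) : ℚ)
        = ((NT G S cu).card : ℚ) + ((NT G S c).card : ℚ)
          + ∑ c' ∈ (Finset.univ.erase cu).erase c, ((NT G S c').card : ℚ) := by
      rw [← hsplit1, ← hsplit2]; push_cast; ring
    have hS2 : ((∑ c' : Γ, (NT G S c').card : ℕ) : ℚ) ≤ 2 * (S.card : ℚ) := by
      have : ∑ s ∈ S, m s ≤ 2 * S.card := by
        calc ∑ s ∈ S, m s ≤ ∑ _s ∈ S, 2 := Finset.sum_le_sum (fun s _ => hm2 s)
          _ = 2 * S.card := by rw [Finset.sum_const, smul_eq_mul, Nat.mul_comm]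
      have := hsumeq ▸ this
      exact_mod_cast this
    rw [htot, hNcard] at hS2
    linarith [hlow, hS2, hkw]
  have hcardc : ((NT G S c).card : ℚ) = (k : ℚ) := by
    have hlo := hgeK c hcc
    have h1 : (NT G S c).card < k + 1 := by exact_mod_cast hup
    have h2 : k ≤ (NT G S c).card := by exact_mod_cast hlo
    have : (NT G S c).card = k := by omega
    rw [this]
  -- conclude
  obtain ⟨z, hz, hzadj⟩ := hPc
  refine ⟨NT G S c, by rw [hcardc, hk], cut_separates G S hcc hz hucu, ?_⟩
  rw [mem_NT]
  exact ⟨hx, z, hz, hzadj⟩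
end

section
/- Let G be a minimally t-tough, claw-free graph and e = uv a non-bridge edge of G with D(e) ≠ ∅. If the component C_u(e) of (G−e)−S(e) containing u equals {u} and the component C_v(e) containing v is not {v}, then d_G(u) ≤ 2t+1 or v is contained in a 2t-vertex-cut of G. -/
open SimpleGraph

variable {V : Type*}

/- ========= auxiliary machinery ========= -/

section AuxMachinery

open Classical in
/-- walks stay inside adjacency-closed sets -/
private lemma aux_walk_closed {G : SimpleGraph V} {A X : Set V}
    (hcl : ∀ a, a ∈ X → a ∈ A → ∀ b, b ∈ A → G.Adj a b → b ∈ X) :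
    ∀ {x y : ↥A} (_ : (G.induce A).Walk x y), (x : V) ∈ X → (y : V) ∈ X := by
  intro x y w
  induction w with
  | nil => exact id
  | @cons a b c h p ih =>
    intro hx
    exact ih (hcl a.1 hx a.2 b.1 b.2 (by exact h))

private lemma aux_reach_closed {G : SimpleGraph V} {A X : Set V}
    (hcl : ∀ a, a ∈ X → a ∈ A → ∀ b, b ∈ A → G.Adj a b → b ∈ X)
    {x y : V} {hx : x ∈ A} {hy : y ∈ A}
    (hr : (G.induce A).Reachable ⟨x, hx⟩ ⟨y, hy⟩) (hxX : x ∈ X) : y ∈ X := by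
  obtain ⟨w⟩ := hr
  exact aux_walk_closed hcl w hxX

/-- if `X` is an adjacency-closed set avoiding `T` with a point inside and a
point outside, then `G − T` has at least two components. -/
private lemma aux_two_le_nc [Finite V] {G : SimpleGraph V} {T X : Set V}
    (hcl : ∀ a, a ∈ X → a ∉ T → ∀ b, b ∉ T → G.Adj a b → b ∈ X)
    {x y : V} (hx : x ∈ X) (hxT : x ∉ T) (hyX : y ∉ X) (hyT : y ∉ T) :
    2 ≤ numComponents G T := by
  have hxc : x ∈ Tᶜ := hxT
  have hyc : y ∈ Tᶜ := hyT
  have hne : (G.induce Tᶜ).connectedComponentMk ⟨x, hxc⟩ ≠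
      (G.induce Tᶜ).connectedComponentMk ⟨y, hyc⟩ := by
    intro h
    have hr := SimpleGraph.ConnectedComponent.exact h
    exact hyX (aux_reach_closed (fun a ha haA b hbA hab => hcl a ha haA b hbA hab) hr hx)
  have : Nontrivial ((G.induce Tᶜ).ConnectedComponent) := ⟨_, _, hne⟩
  exact Finite.one_lt_card_iff_nontrivial.mpr this

/-- membership in the connected component `c` of `G − Q` -/
private def auxMC (G : SimpleGraph V) (Q : Finset V)
    (c : (G.induce (↑Q : Set V)ᶜ).ConnectedComponent) (x : V) : Prop :=
  ∃ hx : x ∈ ((↑Q : Set V))ᶜ, (G.induce (↑Q : Set V)ᶜ).connectedComponentMk ⟨x, hx⟩ = c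

open Classical in
/-- the set of vertices of `Q` adjacent to component `c` of `G − Q` -/
private noncomputable def auxNbr (G : SimpleGraph V) (Q : Finset V)
    (c : (G.induce (↑Q : Set V)ᶜ).ConnectedComponent) : Finset V :=
  Q.filter (fun r => ∃ x, auxMC G Q c x ∧ G.Adj r x)

variable {G : SimpleGraph V} {Q : Finset V}

private lemma auxMC_notQ {c} {x : V} (h : auxMC G Q c x) : x ∉ Q := by
  obtain ⟨hx, -⟩ := h
  simpa using hx

private lemma auxMC_unique {c c'} {x : V} (h : auxMC G Q c x) (h' : auxMC G Q c' x) :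
    c = c' := by
  obtain ⟨hx, rfl⟩ := h
  obtain ⟨hx', rfl⟩ := h'
  rfl

private lemma auxMC_adj {c} {x y : V} (h : auxMC G Q c x) (hadj : G.Adj x y)
    (hy : y ∉ Q) : auxMC G Q c y := by
  obtain ⟨hx, rfl⟩ := h
  have hy' : y ∈ ((↑Q : Set V))ᶜ := by simpa using hy
  exact ⟨hy', SimpleGraph.ConnectedComponent.sound
    (SimpleGraph.Adj.reachable (by exact hadj.symm : (G.induce (↑Q : Set V)ᶜ).Adj ⟨y, hy'⟩ ⟨x, hx⟩))⟩

private lemma auxMC_exists (c : (G.induce (↑Q : Set V)ᶜ).ConnectedComponent) :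
    ∃ x, auxMC G Q c x := by
  obtain ⟨⟨x, hx⟩, h⟩ := c.exists_rep
  exact ⟨x, hx, h⟩

open Classical in
private lemma auxNbr_subset {c} : auxNbr G Q c ⊆ Q := Finset.filter_subset _ _

open Classical in
private lemma mem_auxNbr {c} {r : V} :
    r ∈ auxNbr G Q c ↔ r ∈ Q ∧ ∃ x, auxMC G Q c x ∧ G.Adj r x := by
  simp [auxNbr]

/-- distinct components are non-adjacent (and distinct as vertices) -/
private lemma auxMC_nonadj {c c'} {x y : V} (h : auxMC G Q c x) (h' : auxMC G Q c' y)
    (hne : c ≠ c') : ¬ G.Adj x y ∧ x ≠ y := by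
  constructor
  · intro hadj
    exact hne (auxMC_unique h (auxMC_adj h' hadj.symm (auxMC_notQ h)))
  · rintro rfl
    exact hne (auxMC_unique h h')

/-- deleting the neighbourhood of a component disconnects the graph -/
private lemma aux_two_le_nc_nbr [Finite V] {c} {y : V} (hyQ : y ∉ Q)
    (hyc : ¬ auxMC G Q c y) : 2 ≤ numComponents G ↑(auxNbr G Q c) := by
  obtain ⟨x, hx⟩ := auxMC_exists c
  have hXcl : ∀ a, a ∈ {z | auxMC G Q c z} → a ∉ (↑(auxNbr G Q c) : Set V) →
      ∀ b, b ∉ (↑(auxNbr G Q c) : Set V) → G.Adj a b → b ∈ {z | auxMC G Q c z} := by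
    intro a ha _ b hb hadj
    by_cases hbQ : b ∈ Q
    · exact absurd (by exact_mod_cast mem_auxNbr.mpr ⟨hbQ, a, ha, hadj.symm⟩) hb
    · exact auxMC_adj ha hadj hbQ
  refine aux_two_le_nc hXcl hx ?_ hyc ?_
  · simpa using fun h => auxMC_notQ hx (auxNbr_subset h)
  · simpa using fun h => hyQ (auxNbr_subset h)

open Classical in
/-- double counting -/
private lemma aux_sum_nbr (G : SimpleGraph V) (Q : Finset V)
    (F : Finset ((G.induce (↑Q : Set V)ᶜ).ConnectedComponent)) :
    ∑ c ∈ F, (auxNbr G Q c).card = ∑ r ∈ Q, (F.filter (fun c => r ∈ auxNbr G Q c)).card := by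
  have h1 : ∀ c ∈ F, (auxNbr G Q c).card = ∑ r ∈ Q, if r ∈ auxNbr G Q c then 1 else 0 := by
    intro c _
    rw [auxNbr, Finset.card_filter]
    refine Finset.sum_congr rfl fun r hr => ?_
    congr 1
    simp [mem_auxNbr, hr]
  calc ∑ c ∈ F, (auxNbr G Q c).card
      = ∑ c ∈ F, ∑ r ∈ Q, if r ∈ auxNbr G Q c then 1 else 0 := Finset.sum_congr rfl h1
    _ = ∑ r ∈ Q, ∑ c ∈ F, if r ∈ auxNbr G Q c then 1 else 0 := Finset.sum_comm
    _ = ∑ r ∈ Q, (F.filter (fun c => r ∈ auxNbr G Q c)).card := by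
        refine Finset.sum_congr rfl fun r _ => ?_
        rw [Finset.card_filter]

open Classical in
/-- claw-freeness: every vertex sees at most two components -/
private lemma aux_deg_le_two (hcf : ClawFree G) (r : V)
    (F : Finset ((G.induce (↑Q : Set V)ᶜ).ConnectedComponent)) :
    (F.filter (fun c => r ∈ auxNbr G Q c)).card ≤ 2 := by
  by_contra h
  push_neg at h
  obtain ⟨c₁, hc₁, c₂, hc₂, c₃, hc₃, h12, h13, h23⟩ := Finset.two_lt_card.mp h
  obtain ⟨-, x₁, hx₁, ha₁⟩ := mem_auxNbr.mp (Finset.mem_filter.mp hc₁).2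
  obtain ⟨-, x₂, hx₂, ha₂⟩ := mem_auxNbr.mp (Finset.mem_filter.mp hc₂).2
  obtain ⟨-, x₃, hx₃, ha₃⟩ := mem_auxNbr.mp (Finset.mem_filter.mp hc₃).2
  obtain ⟨hn12, hd12⟩ := auxMC_nonadj hx₁ hx₂ h12
  obtain ⟨hn13, hd13⟩ := auxMC_nonadj hx₁ hx₃ h13
  obtain ⟨hn23, hd23⟩ := auxMC_nonadj hx₂ hx₃ h23
  exact hcf ⟨r, x₁, x₂, x₃, hd12, hd13, hd23, ha₁, ha₂, ha₃, hn12, hn13, hn23⟩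

/-- every separating set has at least `2t` vertices -/
private lemma aux_cut_card_ge [Fintype V] {G : SimpleGraph V} {t : ℚ}
    (h : HasToughness G t) (htpos : 0 < t) (T : Finset V)
    (h2 : 2 ≤ numComponents G ↑T) : 2 * t ≤ (T.card : ℚ) := by
  have hle := h.1 T h2
  have hw : (0 : ℚ) < (numComponents G ↑T : ℚ) := by
    have : (0:ℕ) < numComponents G ↑T := lt_of_lt_of_le (by norm_num) h2
    exact_mod_cast this
  have hmul : t * (numComponents G ↑T : ℚ) ≤ (T.card : ℚ) := (le_div_iff₀ hw).mp hle
  have h2w : (2 : ℚ) ≤ (numComponents G ↑T : ℚ) := by exact_mod_cast h2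
  nlinarith

/-- in a claw-free graph of toughness `t`, `2t` is an integer -/
private lemma aux_two_t_int [Fintype V] {G : SimpleGraph V} {t : ℚ}
    (hcf : ClawFree G) (h : HasToughness G t) (htpos : 0 < t) :
    ∃ m : ℕ, (m : ℚ) = 2 * t := by
  classical
  obtain ⟨S₀, hw2, heq⟩ := h.2
  set ι := (G.induce (↑S₀ : Set V)ᶜ).ConnectedComponent with hι
  letI : Fintype ι := Fintype.ofFinite _
  have hcard : numComponents G ↑S₀ = Fintype.card ι := Nat.card_eq_fintype_card
  have hnt : Nontrivial ι := Finite.one_lt_card_iff_nontrivial.mp (lt_of_lt_of_le (by norm_num) hw2)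
  -- each component neighbourhood is a cut of size ≥ 2t
  have hlow : ∀ c : ι, 2 * t ≤ ((auxNbr G S₀ c).card : ℚ) := by
    intro c
    obtain ⟨c', hc'⟩ := exists_ne c
    obtain ⟨y, hy⟩ := auxMC_exists c'
    have h2 : 2 ≤ numComponents G ↑(auxNbr G S₀ c) :=
      aux_two_le_nc_nbr (auxMC_notQ hy) (fun hmem => hc' (auxMC_unique hy hmem))
    exact aux_cut_card_ge h htpos _ h2
  -- total count
  have hup : ∑ c ∈ Finset.univ, (auxNbr G S₀ c).card ≤ 2 * S₀.card := by
    rw [aux_sum_nbr]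
    calc ∑ r ∈ S₀, (Finset.univ.filter (fun c => r ∈ auxNbr G S₀ c)).card
        ≤ ∑ _r ∈ S₀, 2 := Finset.sum_le_sum (fun r _ => aux_deg_le_two hcf r _)
      _ = 2 * S₀.card := by rw [Finset.sum_const, smul_eq_mul, mul_comm]
  obtain ⟨c₀⟩ := (inferInstance : Nonempty ι)
  refine ⟨(auxNbr G S₀ c₀).card, le_antisymm ?_ (hlow c₀)⟩
  -- card S₀ = t * w₀
  have hwpos : (0:ℚ) < (numComponents G ↑S₀ : ℚ) := by
    have : (0:ℕ) < numComponents G ↑S₀ := lt_of_lt_of_le (by norm_num) hw2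
    exact_mod_cast this
  have hS₀card : (S₀.card : ℚ) = t * (numComponents G ↑S₀ : ℚ) := by
    rw [heq]; field_simp
  -- split off c₀
  have hsplit : (auxNbr G S₀ c₀).card + ∑ c ∈ Finset.univ.erase c₀, (auxNbr G S₀ c).card
      = ∑ c ∈ Finset.univ, (auxNbr G S₀ c).card := by
    rw [add_comm]
    exact Finset.sum_erase_add _ _ (Finset.mem_univ c₀)
  have herase : ((Finset.univ.erase c₀).card : ℚ) = (Fintype.card ι : ℚ) - 1 := by
    rw [Finset.card_erase_of_mem (Finset.mem_univ c₀), Finset.card_univ]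
    have : 1 ≤ Fintype.card ι := Fintype.card_pos
    push_cast [Nat.cast_sub this]
    ring
  have hlow' : ((Finset.univ.erase c₀).card : ℚ) * (2 * t)
      ≤ ∑ c ∈ Finset.univ.erase c₀, ((auxNbr G S₀ c).card : ℚ) := by
    have := Finset.card_nsmul_le_sum (Finset.univ.erase c₀)
      (fun c => ((auxNbr G S₀ c).card : ℚ)) (2 * t) (fun c _ => hlow c)
    simpa [nsmul_eq_mul] using this
  have hupQ : ∑ c ∈ Finset.univ, ((auxNbr G S₀ c).card : ℚ) ≤ 2 * S₀.card := by
    exact_mod_cast hup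
  have hsplitQ : ((auxNbr G S₀ c₀).card : ℚ) + ∑ c ∈ Finset.univ.erase c₀, ((auxNbr G S₀ c).card : ℚ)
      = ∑ c ∈ Finset.univ, ((auxNbr G S₀ c).card : ℚ) := by
    exact_mod_cast hsplit
  have hwι : (numComponents G ↑S₀ : ℚ) = (Fintype.card ι : ℚ) := by exact_mod_cast hcard
  nlinarith [hlow' , hupQ, hsplitQ]

end AuxMachinery

/-- Let `G` be minimally `t`-tough and claw-free, `e = uv` a non-bridge edge
with `D(e) ≠ ∅`.  If the component of `(G−e) − S(e)` containing `u` is `{u}`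
and the one containing `v` is not `{v}`, then `d_G(u) ≤ 2t + 1` or `v` is
contained in a `2t`-vertex-cut of `G`. -/
theorem min_good_cut_singleton_component [Fintype V] (G : SimpleGraph V)
    [DecidableRel G.Adj]
    (t : ℚ) (hmt : MinimallyTough G t) (hcf : ClawFree G)
    (u v : V) (huv : G.Adj u v) (hnb : ¬ IsBridgeIn G (∅ : Set V) u v)
    (S : Finset V) (hS : IsMinGoodCut G t u v S)
    (hD : (Dset G ↑S u).Nonempty)
    (hCu : compOf (G.deleteEdges {s(u, v)}) ↑S u = {u})
    (hCv : compOf (G.deleteEdges {s(u, v)}) ↑S v ≠ {v}) :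
    ((G.degree u : ℚ) ≤ 2 * t + 1) ∨ InTwoTCut G t v := by
  classical
  obtain ⟨⟨hg1, hg2, huS, hvS, -, -⟩, -⟩ := hS
  have huvne : u ≠ v := G.ne_of_adj huv
  set Ge := G.deleteEdges {s(u, v)} with hGedef
  have huSc : u ∈ ((↑S : Set V))ᶜ := huS
  have hvSc : v ∈ ((↑S : Set V))ᶜ := hvS
  have huSfin : u ∉ S := by simpa using huS
  have hvSfin : v ∉ S := by simpa using hvS
  -- t is positive
  have h1w : 1 ≤ numComponents G ↑S := by
    have hne : Nonempty ((G.induce (↑S : Set V)ᶜ).ConnectedComponent) :=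
      ⟨(G.induce (↑S : Set V)ᶜ).connectedComponentMk ⟨u, huSc⟩⟩
    exact Nat.one_le_iff_ne_zero.mpr (Nat.card_ne_zero.mpr ⟨hne, inferInstance⟩)
  have htpos : 0 < t := by
    by_contra hle
    push_neg at hle
    have hdiv : (S.card : ℚ) / t ≤ 0 :=
      div_nonpos_iff.mpr (Or.inl ⟨Nat.cast_nonneg _, hle⟩)
    have h1wQ : (1 : ℚ) ≤ (numComponents G ↑S : ℚ) := by exact_mod_cast h1w
    linarith [hg1]
  -- adjacency transfer between G and Ge
  have hGeAdjOf : ∀ {a b : V}, a ≠ v → b ≠ v → G.Adj a b → Ge.Adj a b := by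
    intro a b ha hb hadj
    rw [hGedef, SimpleGraph.deleteEdges_adj]
    refine ⟨hadj, ?_⟩
    simp only [Set.mem_singleton_iff, Sym2.eq_iff]
    rintro (⟨rfl, rfl⟩ | ⟨rfl, rfl⟩)
    · exact hb rfl
    · exact ha rfl
  have hGeAdjG : ∀ {a b : V}, Ge.Adj a b → G.Adj a b := by
    intro a b h
    rw [hGedef, SimpleGraph.deleteEdges_adj] at h
    exact h.1
  -- all neighbours of u are v or in S
  have hNu : ∀ x : V, G.Adj u x → x = v ∨ x ∈ S := by
    intro x hadj
    by_contra hcon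
    push_neg at hcon
    obtain ⟨hxv, hxS⟩ := hcon
    have hxSc : x ∈ ((↑S : Set V))ᶜ := by simpa using hxS
    have hGeux : Ge.Adj u x := hGeAdjOf huvne hxv hadj
    have hmem : x ∈ compOf Ge ↑S u := by
      refine ⟨huSc, hxSc, ?_⟩
      exact SimpleGraph.Adj.reachable
        (by exact hGeux : (Ge.induce (↑S : Set V)ᶜ).Adj ⟨u, huSc⟩ ⟨x, hxSc⟩)
    rw [hCu] at hmem
    have : x = u := hmem
    subst this
    exact G.irrefl hadj
  -- a vertex of C_v(e) other than v
  have hvmem : v ∈ compOf Ge ↑S v := ⟨hvSc, hvSc, SimpleGraph.Reachable.refl _⟩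
  have hexy : ∃ y ∈ compOf Ge ↑S v, y ≠ v := by
    by_contra hcon
    push_neg at hcon
    refine hCv (Set.Subset.antisymm (fun z hz => hcon z hz) ?_)
    rintro z hz
    rw [Set.mem_singleton_iff] at hz
    subst hz
    exact hvmem
  obtain ⟨y, hy, hyv⟩ := hexy
  obtain ⟨hvSc2, hySc, hreachy⟩ := hy
  -- v has a neighbour p₀ in C_v(e)
  have hp : ∃ p : V, p ∉ S ∧ Ge.Adj v p := by
    by_contra hcon
    push_neg at hcon
    refine hyv (aux_reach_closed (A := ((↑S : Set V))ᶜ) (X := {v}) ?_ hreachy rfl)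
    intro a ha _ b hb hadj
    rw [Set.mem_singleton_iff] at ha
    subst ha
    exact absurd hadj (hcon b (by simpa using hb))
  obtain ⟨p₀, hp₀S, hvp₀Ge⟩ := hp
  have hpSc : p₀ ∈ ((↑S : Set V))ᶜ := by simpa using hp₀S
  have hvp₀ : G.Adj v p₀ := hGeAdjG hvp₀Ge
  have hp₀v : p₀ ≠ v := fun h => G.irrefl (h ▸ hvp₀)
  -- the set R = S ∪ {v}
  set R : Finset V := insert v S with hRdef
  have hmemR : ∀ x : V, x ∈ (↑R : Set V) ↔ x = v ∨ x ∈ S := by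
    intro x; simp [hRdef]
  have huR : u ∉ (↑R : Set V) := by
    rw [hmemR]; push_neg; exact ⟨huvne, huSfin⟩
  have huRc : u ∈ ((↑R : Set V))ᶜ := huR
  have huRfin : u ∉ R := by simpa using huR
  have hpR : p₀ ∉ (↑R : Set V) := by
    rw [hmemR]; push_neg; exact ⟨hp₀v, hp₀S⟩
  have hpRc : p₀ ∈ ((↑R : Set V))ᶜ := hpR
  have hpRfin : p₀ ∉ R := by simpa using hpR
  have hRS : ∀ {x : V}, x ∈ ((↑R : Set V))ᶜ → x ∈ ((↑S : Set V))ᶜ := by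
    intro x hx
    rw [Set.mem_compl_iff, hmemR] at hx
    push_neg at hx
    simpa using hx.2
  set ι := (G.induce (↑R : Set V)ᶜ).ConnectedComponent with hιdef
  letI : Fintype ι := Fintype.ofFinite _
  set cu := (G.induce (↑R : Set V)ᶜ).connectedComponentMk ⟨u, huRc⟩ with hcudef
  set cP := (G.induce (↑R : Set V)ᶜ).connectedComponentMk ⟨p₀, hpRc⟩ with hcPdef
  have hmcu : auxMC G R cu u := ⟨huRc, rfl⟩
  have hmcP : auxMC G R cP p₀ := ⟨hpRc, rfl⟩
  -- lifting reachability from G − R to Ge − S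
  have hreach_lift : ∀ {x z : V} (hx : x ∈ ((↑R : Set V))ᶜ) (hz : z ∈ ((↑R : Set V))ᶜ),
      (G.induce (↑R : Set V)ᶜ).Reachable ⟨x, hx⟩ ⟨z, hz⟩ →
      (Ge.induce (↑S : Set V)ᶜ).Reachable ⟨x, hRS hx⟩ ⟨z, hRS hz⟩ := by
    intro x z hx hz hr
    have hres := aux_reach_closed (A := ((↑R : Set V))ᶜ)
      (X := {w | ∃ hw : w ∈ ((↑S : Set V))ᶜ,
        (Ge.induce (↑S : Set V)ᶜ).Reachable ⟨x, hRS hx⟩ ⟨w, hw⟩})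
      ?_ hr ⟨hRS hx, SimpleGraph.Reachable.refl _⟩
    · obtain ⟨hw, hrw⟩ := hres
      exact hrw
    · intro a ha haA b hbA hadj
      obtain ⟨haS, hra⟩ := ha
      have hbS : b ∈ ((↑S : Set V))ᶜ := hRS hbA
      have hav : a ≠ v := by
        intro h
        exact haA (by rw [h]; exact (hmemR v).mpr (Or.inl rfl))
      have hbv : b ≠ v := by
        intro h
        exact hbA (by rw [h]; exact (hmemR v).mpr (Or.inl rfl))
      have hGeab : Ge.Adj a b := hGeAdjOf hav hbv hadj
      exact ⟨hbS, hra.trans (SimpleGraph.Adj.reachable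
        (by exact hGeab : (Ge.induce (↑S : Set V)ᶜ).Adj ⟨a, haS⟩ ⟨b, hbS⟩))⟩
  -- the components of u and p₀ in G − R are different
  have hGevu : ¬ Ge.Adj v u := by
    rw [hGedef, SimpleGraph.deleteEdges_adj]
    rintro ⟨-, hmem⟩
    exact hmem (by rw [Set.mem_singleton_iff, Sym2.eq_swap])
  have hcucP : cu ≠ cP := by
    intro h
    have hr := SimpleGraph.ConnectedComponent.exact h
    have hr' := hreach_lift huRc hpRc hr
    have hmem : p₀ ∈ compOf Ge ↑S u := ⟨hRS huRc, hRS hpRc, hr'⟩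
    rw [hCu] at hmem
    have : p₀ = u := hmem
    subst this
    exact hGevu hvp₀Ge
  -- the family of components other than those of u and p₀
  set 𝒟 := (Finset.univ.erase cu).erase cP with h𝒟def
  have hcPmem : cP ∈ Finset.univ.erase cu := Finset.mem_erase.mpr ⟨Ne.symm hcucP, Finset.mem_univ _⟩
  have hcard2 : 2 ≤ Fintype.card ι := by
    have hsub : ({cu, cP} : Finset ι).card ≤ Fintype.card ι := by
      rw [← Finset.card_univ]
      exact Finset.card_le_card (Finset.subset_univ _)
    rwa [Finset.card_pair hcucP] at hsub
  have h𝒟card : Fintype.card ι = 𝒟.card + 2 := by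
    have h1 : (Finset.univ.erase cu).card = Fintype.card ι - 1 := by
      rw [Finset.card_erase_of_mem (Finset.mem_univ _), Finset.card_univ]
    have h2 : 𝒟.card = (Finset.univ.erase cu).card - 1 :=
      Finset.card_erase_of_mem hcPmem
    omega
  -- claw helper
  have hclaw3 : ∀ (r x₁ x₂ x₃ : V) (c₁ c₂ c₃ : ι), auxMC G R c₁ x₁ → auxMC G R c₂ x₂ →
      auxMC G R c₃ x₃ → c₁ ≠ c₂ → c₁ ≠ c₃ → c₂ ≠ c₃ →
      G.Adj r x₁ → G.Adj r x₂ → G.Adj r x₃ → False := by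
    intro r x₁ x₂ x₃ c₁ c₂ c₃ h₁ h₂ h₃ n₁₂ n₁₃ n₂₃ a₁ a₂ a₃
    obtain ⟨e₁₂, d₁₂⟩ := auxMC_nonadj h₁ h₂ n₁₂
    obtain ⟨e₁₃, d₁₃⟩ := auxMC_nonadj h₁ h₃ n₁₃
    obtain ⟨e₂₃, d₂₃⟩ := auxMC_nonadj h₂ h₃ n₂₃
    exact hcf ⟨r, x₁, x₂, x₃, d₁₂, d₁₃, d₂₃, a₁, a₂, a₃, e₁₂, e₁₃, e₂₃⟩
  -- S₁ and AA
  set S₁ := S.filter (fun r => G.Adj u r) with hS₁def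
  set AA := S.filter (fun r => ∃ p, auxMC G R cP p ∧ G.Adj r p) with hAAdef
  -- v sees no component of 𝒟
  have hv0 : (𝒟.filter (fun c => v ∈ auxNbr G R c)).card = 0 := by
    rw [Finset.card_eq_zero, Finset.filter_eq_empty_iff]
    intro c hc hvnbr
    simp only [h𝒟def, Finset.mem_erase] at hc
    obtain ⟨-, x, hx, hax⟩ := mem_auxNbr.mp hvnbr
    exact hclaw3 v u p₀ x cu cP c hmcu hmcP hx hcucP (Ne.symm hc.2.1) (Ne.symm hc.1)
      huv.symm hvp₀ hax
  -- pointwise bound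
  have hpoint : ∀ r ∈ S, (𝒟.filter (fun c => r ∈ auxNbr G R c)).card
      + (if r ∈ S₁ then 1 else 0) + (if r ∈ AA then 1 else 0) ≤ 2 := by
    intro r hrS
    by_cases h1 : r ∈ S₁ <;> by_cases h2 : r ∈ AA
    · have hadjur : G.Adj u r := by
        rw [hS₁def] at h1; exact (Finset.mem_filter.mp h1).2
      obtain ⟨-, p, hp, hrp⟩ : r ∈ S ∧ ∃ p, auxMC G R cP p ∧ G.Adj r p := by
        rw [hAAdef] at h2; exact Finset.mem_filter.mp h2
      have h0 : (𝒟.filter (fun c => r ∈ auxNbr G R c)).card = 0 := by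
        rw [Finset.card_eq_zero, Finset.filter_eq_empty_iff]
        intro c hc hrnbr
        simp only [h𝒟def, Finset.mem_erase] at hc
        obtain ⟨-, x, hx, hax⟩ := mem_auxNbr.mp hrnbr
        exact hclaw3 r u p x cu cP c hmcu hp hx hcucP (Ne.symm hc.2.1) (Ne.symm hc.1)
          hadjur.symm hrp hax
      simp [h0, h1, h2]
    · have hadjur : G.Adj u r := by
        rw [hS₁def] at h1; exact (Finset.mem_filter.mp h1).2
      have hle1 : (𝒟.filter (fun c => r ∈ auxNbr G R c)).card ≤ 1 := by
        by_contra hgt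
        push_neg at hgt
        obtain ⟨c, hc, c', hc', hcc'⟩ := Finset.one_lt_card.mp hgt
        obtain ⟨hcD, hrc⟩ := Finset.mem_filter.mp hc
        obtain ⟨hcD', hrc'⟩ := Finset.mem_filter.mp hc'
        simp only [h𝒟def, Finset.mem_erase] at hcD hcD'
        obtain ⟨-, x, hx, hax⟩ := mem_auxNbr.mp hrc
        obtain ⟨-, x', hx', hax'⟩ := mem_auxNbr.mp hrc'
        exact hclaw3 r u x x' cu c c' hmcu hx hx' (Ne.symm hcD.2.1) (Ne.symm hcD'.2.1) hcc'
          hadjur.symm hax hax'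
      simp only [h1, h2, if_pos, if_neg, if_true, if_false]
      omega
    · obtain ⟨-, p, hp, hrp⟩ : r ∈ S ∧ ∃ p, auxMC G R cP p ∧ G.Adj r p := by
        rw [hAAdef] at h2; exact Finset.mem_filter.mp h2
      have hle1 : (𝒟.filter (fun c => r ∈ auxNbr G R c)).card ≤ 1 := by
        by_contra hgt
        push_neg at hgt
        obtain ⟨c, hc, c', hc', hcc'⟩ := Finset.one_lt_card.mp hgt
        obtain ⟨hcD, hrc⟩ := Finset.mem_filter.mp hc
        obtain ⟨hcD', hrc'⟩ := Finset.mem_filter.mp hc'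
        simp only [h𝒟def, Finset.mem_erase] at hcD hcD'
        obtain ⟨-, x, hx, hax⟩ := mem_auxNbr.mp hrc
        obtain ⟨-, x', hx', hax'⟩ := mem_auxNbr.mp hrc'
        exact hclaw3 r p x x' cP c c' hp hx hx' (Ne.symm hcD.1) (Ne.symm hcD'.1) hcc'
          hrp hax hax'
      simp only [h1, h2, if_pos, if_neg, if_true, if_false]
      omega
    · have hle2 := aux_deg_le_two (Q := R) hcf r 𝒟
      simp only [h1, h2, if_neg, if_false]
      omega
  -- total counting bound
  have hS₁sub : S₁ ⊆ S := by rw [hS₁def]; exact Finset.filter_subset _ _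
  have hAAsub : AA ⊆ S := by rw [hAAdef]; exact Finset.filter_subset _ _
  have htotal : (∑ c ∈ 𝒟, (auxNbr G R c).card) + S₁.card + AA.card ≤ 2 * S.card := by
    have hsum := aux_sum_nbr G R 𝒟
    have hins : ∑ r ∈ R, (𝒟.filter (fun c => r ∈ auxNbr G R c)).card
        = (𝒟.filter (fun c => v ∈ auxNbr G R c)).card
          + ∑ r ∈ S, (𝒟.filter (fun c => r ∈ auxNbr G R c)).card := by
      exact Finset.sum_insert hvSfin
    have hS₁sum : (∑ r ∈ S, if r ∈ S₁ then 1 else 0) = S₁.card := by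
      rw [← Finset.card_filter]
      congr 1
      rw [Finset.filter_mem_eq_inter, Finset.inter_eq_right.mpr hS₁sub]
    have hAAsum : (∑ r ∈ S, if r ∈ AA then 1 else 0) = AA.card := by
      rw [← Finset.card_filter]
      congr 1
      rw [Finset.filter_mem_eq_inter, Finset.inter_eq_right.mpr hAAsub]
    calc (∑ c ∈ 𝒟, (auxNbr G R c).card) + S₁.card + AA.card
        = (∑ r ∈ S, (𝒟.filter (fun c => r ∈ auxNbr G R c)).card)
          + (∑ r ∈ S, if r ∈ S₁ then 1 else 0) + (∑ r ∈ S, if r ∈ AA then 1 else 0) := by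
          rw [hS₁sum, hAAsum, hsum, hins, hv0, zero_add]
      _ = ∑ r ∈ S, ((𝒟.filter (fun c => r ∈ auxNbr G R c)).card
          + (if r ∈ S₁ then 1 else 0) + (if r ∈ AA then 1 else 0)) := by
          rw [Finset.sum_add_distrib, Finset.sum_add_distrib]
      _ ≤ ∑ _r ∈ S, 2 := Finset.sum_le_sum hpoint
      _ = 2 * S.card := by rw [Finset.sum_const, smul_eq_mul, mul_comm]
  -- lower bound for components in 𝒟
  have hc2t : ∀ c ∈ 𝒟, 2 * t ≤ ((auxNbr G R c).card : ℚ) := by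
    intro c hc
    simp only [h𝒟def, Finset.mem_erase] at hc
    have hnotu : ¬ auxMC G R c u := fun h => hc.2.1 (auxMC_unique h hmcu)
    exact aux_cut_card_ge hmt.1 htpos _ (aux_two_le_nc_nbr huRfin hnotu)
  have hA1 : (𝒟.card : ℚ) * (2 * t) ≤ ∑ c ∈ 𝒟, ((auxNbr G R c).card : ℚ) := by
    have := Finset.card_nsmul_le_sum 𝒟 (fun c => ((auxNbr G R c).card : ℚ)) (2 * t)
      (fun c hc => hc2t c hc)
    simpa [nsmul_eq_mul] using this
  -- numComponents of Ge − S is at most the number of components of G − R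
  have hrepSe : ∀ c : (Ge.induce (↑S : Set V)ᶜ).ConnectedComponent,
      ∃ x : V, ∃ hx : x ∈ ((↑S : Set V))ᶜ,
        (Ge.induce (↑S : Set V)ᶜ).connectedComponentMk ⟨x, hx⟩ = c ∧ x ≠ v := by
    intro c
    obtain ⟨⟨x, hx⟩, hmk⟩ := c.exists_rep
    by_cases hxv : x = v
    · subst hxv
      refine ⟨y, hySc, ?_, hyv⟩
      exact (SimpleGraph.ConnectedComponent.sound hreachy.symm).trans hmk
    · exact ⟨x, hx, hmk, hxv⟩
  choose xf hxfS hxfmk hxfv using hrepSe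
  have hxfR : ∀ c, xf c ∈ ((↑R : Set V))ᶜ := by
    intro c
    rw [Set.mem_compl_iff, hmemR]
    push_neg
    exact ⟨hxfv c, by simpa using hxfS c⟩
  have hinj : Function.Injective
      (fun c => (G.induce (↑R : Set V)ᶜ).connectedComponentMk ⟨xf c, hxfR c⟩) := by
    intro c c' h
    have hr := SimpleGraph.ConnectedComponent.exact h
    have hr' := hreach_lift (hxfR c) (hxfR c') hr
    have heq : (Ge.induce (↑S : Set V)ᶜ).connectedComponentMk ⟨xf c, hxfS c⟩
        = (Ge.induce (↑S : Set V)ᶜ).connectedComponentMk ⟨xf c', hxfS c'⟩ :=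
      SimpleGraph.ConnectedComponent.sound hr'
    rw [hxfmk c, hxfmk c'] at heq
    exact heq
  have hA4 : numComponents Ge ↑S ≤ 𝒟.card + 2 := by
    have hle := Nat.card_le_card_of_injective _ hinj
    have : numComponents Ge ↑S ≤ Nat.card ι := hle
    rwa [Nat.card_eq_fintype_card, h𝒟card] at this
  -- GoodCut numeric bound
  have hA3 : (S.card : ℚ) < t * (numComponents Ge ↑S : ℚ) := by
    have h := hg2
    rw [div_lt_iff₀ htpos] at h
    linarith
  -- 2t is an integer
  obtain ⟨m, hm⟩ := aux_two_t_int hcf hmt.1 htpos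
  left
  by_contra hdeg
  push_neg at hdeg
  -- degree of u
  have hNufin : G.neighborFinset u = insert v S₁ := by
    ext x
    simp only [SimpleGraph.mem_neighborFinset, Finset.mem_insert, hS₁def, Finset.mem_filter]
    constructor
    · intro hadj
      rcases hNu x hadj with h | h
      · exact Or.inl h
      · exact Or.inr ⟨h, hadj⟩
    · rintro (rfl | ⟨-, h⟩)
      · exact huv
      · exact h
  have hvS₁ : v ∉ S₁ := fun h => hvSfin (hS₁sub h)
  have hdegree : G.degree u = S₁.card + 1 := by
    have : G.degree u = (G.neighborFinset u).card := rfl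
    rw [this, hNufin, Finset.card_insert_of_notMem hvS₁]
  have hS₁ge : 2 * t + 1 ≤ (S₁.card : ℚ) := by
    rw [hdegree] at hdeg
    have h1 : 2 * t < (S₁.card : ℚ) := by push_cast at hdeg; linarith
    have h2 : (m : ℚ) < (S₁.card : ℚ) := by rw [hm]; exact h1
    have h3 : m < S₁.card := by exact_mod_cast h2
    have h4 : m + 1 ≤ S₁.card := h3
    calc 2 * t + 1 = (m : ℚ) + 1 := by rw [hm]
      _ ≤ (S₁.card : ℚ) := by exact_mod_cast h4
  -- AA together with v separates the component of p₀
  have hAA2t : 2 * t - 1 ≤ (AA.card : ℚ) := by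
    set W : Finset V := insert v AA with hWdef
    have hWsubR : ∀ x : V, x ∈ W → x ∈ (↑R : Set V) := by
      intro x hx
      rw [hmemR]
      rcases Finset.mem_insert.mp hx with rfl | h
      · exact Or.inl rfl
      · exact Or.inr (hAAsub h)
    have h2W : 2 ≤ numComponents G ↑W := by
      refine aux_two_le_nc (T := (↑W : Set V)) (X := {z | auxMC G R cP z}) (y := u) ?_ hmcP ?_ ?_ ?_
      · intro a ha haW b hbW hadj
        by_cases hbR : b ∈ (↑R : Set V)
        · rcases (hmemR b).mp hbR with rfl | hbS
          · exact absurd (by simp [hWdef] : b ∈ (↑W : Set V)) hbW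
          · have hbAA : b ∈ AA := by
              rw [hAAdef]
              exact Finset.mem_filter.mpr ⟨hbS, a, ha, hadj.symm⟩
            exact absurd (by simp [hWdef, hbAA] : b ∈ (↑W : Set V)) hbW
        · have hbfin : b ∉ R := by simpa using hbR
          exact auxMC_adj ha hadj hbfin
      · intro h
        exact hpR (hWsubR p₀ (by simpa using h))
      · intro h
        exact hcucP (auxMC_unique hmcu h)
      · intro h
        exact huR (hWsubR u (by simpa using h))
    have hcut := aux_cut_card_ge hmt.1 htpos W h2W
    have hvAA : v ∉ AA := fun h => hvSfin (hAAsub h)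
    rw [hWdef, Finset.card_insert_of_notMem hvAA] at hcut
    push_cast at hcut
    linarith
  -- final contradiction
  have htotalQ : (∑ c ∈ 𝒟, ((auxNbr G R c).card : ℚ)) + S₁.card + AA.card
      ≤ 2 * S.card := by exact_mod_cast htotal
  have hA4Q : (numComponents Ge ↑S : ℚ) ≤ (𝒟.card : ℚ) + 2 := by exact_mod_cast hA4
  have hmulA4 : t * (numComponents Ge ↑S : ℚ) ≤ t * ((𝒟.card : ℚ) + 2) :=
    mul_le_mul_of_nonneg_left hA4Q htpos.le
  have hfin : (S.card : ℚ) < t * (𝒟.card : ℚ) + 2 * t := by nlinarith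
  nlinarith [hA1, htotalQ, hS₁ge, hAA2t, hfin]
end

section
/- Let G be a connected noncomplete graph, A an atom of G, and T a minimum vertex cut of G. If A ∩ T ≠ ∅, then A ⊆ T and |A| ≤ κ(G)/2. -/
open SimpleGraph

variable {V : Type*}

section Helpers

lemma mem_compOf_self_s12 {G : SimpleGraph V} {S : Set V} {u : V} (hu : u ∉ S) :
    u ∈ compOf G S u := ⟨hu, hu, Reachable.refl _⟩

lemma compOf_subset_compl {G : SimpleGraph V} {S : Set V} {u : V} :
    compOf G S u ⊆ Sᶜ := fun _ h => h.2.1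

lemma adj_mem_compOf {G : SimpleGraph V} {S : Set V} {u p q : V}
    (hp : p ∈ compOf G S u) (hadj : G.Adj p q) (hq : q ∉ S) : q ∈ compOf G S u := by
  obtain ⟨hu, hpS, hr⟩ := hp
  exact ⟨hu, hq, hr.trans (SimpleGraph.Adj.reachable (by simpa using hadj :
    (G.induce Sᶜ).Adj ⟨p, hpS⟩ ⟨q, hq⟩))⟩

lemma compOf_eq_of_mem {G : SimpleGraph V} {S : Set V} {u w : V} (hw : w ∈ compOf G S u) :
    compOf G S w = compOf G S u := by
  obtain ⟨hu, hwS, hr⟩ := hw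
  ext z
  constructor
  · rintro ⟨_, hz, hr2⟩; exact ⟨hu, hz, hr.trans hr2⟩
  · rintro ⟨_, hz, hr2⟩; exact ⟨hwS, hz, hr.symm.trans hr2⟩

lemma compOf_elim {G : SimpleGraph V} {S : Set V} {u v w : V} (hvu : v ∉ compOf G S u)
    (h1 : w ∈ compOf G S u) (h2 : w ∈ compOf G S v) : False := by
  obtain ⟨hvS, -, -⟩ := id h2
  apply hvu
  rw [← compOf_eq_of_mem h1, compOf_eq_of_mem h2]
  exact mem_compOf_self_s12 hvS

lemma compOf_subset_of_closed {G : SimpleGraph V} {Y P : Set V} {u : V}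
    (hu : u ∈ P) (hcl : ∀ p q, p ∈ P → G.Adj p q → q ∉ Y → q ∈ P) :
    compOf G Y u ⊆ P := by
  suffices h : ∀ (x y : ↥(Yᶜ)), (G.induce Yᶜ).Walk x y → (x : V) ∈ P → (y : V) ∈ P by
    rintro w ⟨huY, hwY, hr⟩
    exact h _ _ hr.some hu
  intro x y wk
  induction wk with
  | nil => exact id
  | @cons a b c h p ih =>
    intro ha
    exact ih (hcl _ _ ha (by simpa using h) b.2)

lemma two_le_numComponents_s12 {G : SimpleGraph V} [Fintype V] {Y : Set V} {u v : V}
    (hu : u ∉ Y) (hv : v ∉ Y) (hsep : v ∉ compOf G Y u) :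
    2 ≤ numComponents G Y := by
  have hne : (G.induce Yᶜ).connectedComponentMk ⟨u, hu⟩ ≠
      (G.induce Yᶜ).connectedComponentMk ⟨v, hv⟩ := by
    intro he
    exact hsep ⟨hu, hv, ConnectedComponent.exact he⟩
  have : Nontrivial ((G.induce Yᶜ).ConnectedComponent) := ⟨_, _, hne⟩
  exact Finite.one_lt_card_iff_nontrivial.mpr this

lemma vconn_le_ncard {G : SimpleGraph V} [Fintype V] {Y : Set V}
    (h : 2 ≤ numComponents G Y) : vconn G ≤ Y.ncard := by
  classical
  have h2 : 2 ≤ numComponents G ↑Y.toFinset := by rwa [Set.coe_toFinset]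
  have hmem : Y.toFinset.card ∈ {k | ∃ S : Finset V, S.card = k ∧ 2 ≤ numComponents G ↑S} :=
    ⟨Y.toFinset, rfl, h2⟩
  have := Nat.sInf_le hmem
  rwa [← Set.ncard_eq_toFinset_card'] at this

lemma isGraphFragment_compOf {G : SimpleGraph V} [Fintype V] {W : Set V} {w : V}
    (hw : w ∉ W) (h2 : 2 ≤ numComponents G W) (hcard : W.ncard = vconn G) :
    IsGraphFragment G (compOf G W w) := by
  classical
  refine ⟨W.toFinset, w, ?_, ?_, ?_, ?_⟩
  · rw [← Set.ncard_eq_toFinset_card']; exact hcard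
  · rwa [Set.coe_toFinset]
  · simpa using hw
  · rw [Set.coe_toFinset]

lemma exists_other_component {G : SimpleGraph V} [Fintype V] {W : Set V} {c : V}
    (hc : c ∉ W) (h2 : 2 ≤ numComponents G W) :
    ∃ d, d ∉ W ∧ d ∉ compOf G W c := by
  have : Nontrivial ((G.induce Wᶜ).ConnectedComponent) :=
    Finite.one_lt_card_iff_nontrivial.mp h2
  obtain ⟨K, hK⟩ := exists_ne ((G.induce Wᶜ).connectedComponentMk ⟨c, hc⟩)
  obtain ⟨⟨d, hd⟩, rfl⟩ := K.exists_rep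
  refine ⟨d, hd, fun hmem => hK ?_⟩
  obtain ⟨_, _, hr⟩ := hmem
  exact ConnectedComponent.sound hr.symm

lemma exists_vertex_notin {G : SimpleGraph V} [Fintype V] {W : Set V}
    (h2 : 2 ≤ numComponents G W) : ∃ c, c ∉ W := by
  have : Nonempty ((G.induce Wᶜ).ConnectedComponent) := by
    have h2' : 2 ≤ Nat.card ((G.induce Wᶜ).ConnectedComponent) := h2
    have : 0 < Nat.card ((G.induce Wᶜ).ConnectedComponent) := by omega
    exact Nat.card_pos_iff.mp this |>.1
  obtain ⟨K⟩ := this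
  obtain ⟨⟨d, hd⟩, -⟩ := K.exists_rep
  exact ⟨d, hd⟩

lemma ncard_triple [Fintype V] {s t u : Set V} (hst : Disjoint s t) (hsu : Disjoint s u)
    (htu : Disjoint t u) :
    (s ∪ t ∪ u).ncard = s.ncard + t.ncard + u.ncard := by
  rw [Set.ncard_union_eq (Set.disjoint_union_left.mpr ⟨hsu, htu⟩) (Set.toFinite _)
    (Set.toFinite _), Set.ncard_union_eq hst (Set.toFinite _) (Set.toFinite _)]

end Helpers

/-- Let `G` be a connected noncomplete graph, `A` an atom of `G`, and `T` a
minimum vertex cut of `G`.  If `A ∩ T ≠ ∅`, then `A ⊆ T` and `|A| ≤ κ(G)/2`. -/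
theorem atom_meets_min_cut [Fintype V] (G : SimpleGraph V)
    (hconn : G.Connected) (hnc : G ≠ ⊤)
    (A : Set V) (hA : IsGraphAtom G A)
    (T : Finset V) (hTcard : T.card = vconn G) (hTcut : 2 ≤ numComponents G ↑T)
    (hAT : (A ∩ ↑T).Nonempty) :
    A ⊆ ↑T ∧ 2 * A.ncard ≤ vconn G := by
  classical
  obtain ⟨⟨S, a, hScard, hScut, haS, hAeq⟩, hmin⟩ := hA
  have haS' : a ∉ (↑S : Set V) := by simpa using haS
  have haA : a ∈ A := hAeq ▸ mem_compOf_self_s12 haS'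
  have hAcompl : A ⊆ (↑S : Set V)ᶜ := hAeq ▸ compOf_subset_compl
  have hAS : ∀ v ∈ A, v ∉ (↑S : Set V) := fun v hv => hAcompl hv
  have hAcl : ∀ p q, p ∈ A → G.Adj p q → q ∉ (↑S : Set V) → q ∈ A := by
    intro p q hp hadj hq
    rw [hAeq] at hp ⊢
    exact adj_mem_compOf hp hadj hq
  set Ab : Set V := (↑S : Set V)ᶜ \ A with hAbdef
  have hAbS : ∀ v ∈ Ab, v ∉ (↑S : Set V) := fun v hv => hv.1
  have hAbA : ∀ v ∈ Ab, v ∉ A := fun v hv => hv.2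
  have hAbcl : ∀ p q, p ∈ Ab → G.Adj p q → q ∉ (↑S : Set V) → q ∈ Ab :=
    fun p q hp hadj hq => ⟨hq, fun hqA => hp.2 (hAcl q p hqA hadj.symm (hAbS p hp))⟩
  obtain ⟨b, hbS, hbnA⟩ := exists_other_component haS' hScut
  have hbAb : b ∈ Ab := ⟨hbS, by rw [hAeq]; exact hbnA⟩
  have huniv : ∀ v : V, v ∈ A ∨ v ∈ (↑S : Set V) ∨ v ∈ Ab := by
    intro v
    by_cases h1 : v ∈ (↑S : Set V)
    · exact Or.inr (Or.inl h1)
    by_cases h2 : v ∈ A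
    · exact Or.inl h2
    · exact Or.inr (Or.inr ⟨h1, h2⟩)
  obtain ⟨x, hxA, hxT⟩ := hAT
  set κ := vconn G with hκdef
  have hTn : (↑T : Set V).ncard = κ := by rw [Set.ncard_coe_finset]; exact hTcard
  have hSn : (↑S : Set V).ncard = κ := by rw [Set.ncard_coe_finset]; exact hScard
  have hTcount : κ = (A ∩ ↑T).ncard + ((↑S : Set V) ∩ ↑T).ncard + (Ab ∩ ↑T).ncard := by
    have hTsplit : (↑T : Set V) = (A ∩ ↑T) ∪ ((↑S : Set V) ∩ ↑T) ∪ (Ab ∩ ↑T) := by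
      ext v
      constructor
      · intro hv
        rcases huniv v with h | h | h
        · exact Or.inl (Or.inl ⟨h, hv⟩)
        · exact Or.inl (Or.inr ⟨h, hv⟩)
        · exact Or.inr ⟨h, hv⟩
      · rintro ((⟨-, h⟩ | ⟨-, h⟩) | ⟨-, h⟩) <;> exact h
    have hd1 : Disjoint (A ∩ ↑T) ((↑S : Set V) ∩ ↑T) := by
      rw [Set.disjoint_left]; rintro v ⟨h1, -⟩ ⟨h2, -⟩; exact hAS v h1 h2
    have hd2 : Disjoint (A ∩ ↑T) (Ab ∩ ↑T) := by
      rw [Set.disjoint_left]; rintro v ⟨h1, -⟩ ⟨h2, -⟩; exact hAbA v h2 h1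
    have hd3 : Disjoint ((↑S : Set V) ∩ ↑T) (Ab ∩ ↑T) := by
      rw [Set.disjoint_left]; rintro v ⟨h1, -⟩ ⟨h2, -⟩; exact hAbS v h2 h1
    have h := ncard_triple hd1 hd2 hd3
    rw [← hTsplit, hTn] at h
    exact h
  -- Claim 1 : A ⊆ T
  have claim1 : ∀ y ∈ A, y ∉ (↑T : Set V) → False := by
    intro y hyA hyT
    set C : Set V := compOf G (↑T) y with hCdef
    have hyC : y ∈ C := mem_compOf_self_s12 hyT
    have hCT : ∀ v ∈ C, v ∉ (↑T : Set V) := fun v hv => hv.2.1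
    have hCcl : ∀ p q, p ∈ C → G.Adj p q → q ∉ (↑T : Set V) → q ∈ C :=
      fun p q hp hadj hq => adj_mem_compOf hp hadj hq
    set Cb : Set V := (↑T : Set V)ᶜ \ C with hCbdef
    have hCbcl : ∀ p q, p ∈ Cb → G.Adj p q → q ∉ (↑T : Set V) → q ∈ Cb :=
      fun p q hp hadj hq => ⟨hq, fun hqC => hp.2 (hCcl q p hqC hadj.symm hp.1)⟩
    have hTuniv : ∀ v : V, v ∈ C ∨ v ∈ (↑T : Set V) ∨ v ∈ Cb := by
      intro v
      by_cases h1 : v ∈ (↑T : Set V)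
      · exact Or.inr (Or.inl h1)
      by_cases h2 : v ∈ C
      · exact Or.inl h2
      · exact Or.inr (Or.inr ⟨h1, h2⟩)
    set Y : Set V := (A ∩ ↑T) ∪ ((↑S : Set V) ∩ ↑T) ∪ ((↑S : Set V) ∩ C) with hYdef
    have hYcl : ∀ p q, p ∈ A ∩ C → G.Adj p q → q ∉ Y → q ∈ A ∩ C := by
      intro p q hp hadj hqY
      by_cases hqS : q ∈ (↑S : Set V)
      · exfalso
        by_cases hqT : q ∈ (↑T : Set V)
        · exact hqY (Or.inl (Or.inr ⟨hqS, hqT⟩))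
        · exact hqY (Or.inr ⟨hqS, hCcl p q hp.2 hadj hqT⟩)
      · have hqA : q ∈ A := hAcl p q hp.1 hadj hqS
        by_cases hqT : q ∈ (↑T : Set V)
        · exact absurd (Or.inl (Or.inl ⟨hqA, hqT⟩)) hqY
        · exact ⟨hqA, hCcl p q hp.2 hadj hqT⟩
    have hyY : y ∉ Y := by
      rintro ((⟨-, h⟩ | ⟨h, -⟩) | ⟨h, -⟩)
      · exact hyT h
      · exact hAS y hyA h
      · exact hAS y hyA h
    have hbY : b ∉ Y := by
      rintro ((⟨h, -⟩ | ⟨h, -⟩) | ⟨h, -⟩)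
      · exact hAbA b hbAb h
      · exact hAbS b hbAb h
      · exact hAbS b hbAb h
    have hcompY : compOf G Y y ⊆ A ∩ C := compOf_subset_of_closed ⟨hyA, hyC⟩ hYcl
    have hYcut : 2 ≤ numComponents G Y :=
      two_le_numComponents_s12 hyY hbY (fun h => hAbA b hbAb (hcompY h).1)
    have hYge : κ ≤ Y.ncard := vconn_le_ncard hYcut
    have hYgt : κ + 1 ≤ Y.ncard := by
      by_contra hne
      have hYeq : Y.ncard = κ := by omega
      have hge := hmin _ (isGraphFragment_compOf hyY hYcut hYeq)
      have h1 : (compOf G Y y).ncard ≤ (A ∩ C).ncard :=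
        Set.ncard_le_ncard hcompY (Set.toFinite _)
      have h2 : (A ∩ C).ncard < A.ncard := by
        refine Set.ncard_lt_ncard ?_ (Set.toFinite _)
        rw [Set.ssubset_iff_of_subset Set.inter_subset_left]
        exact ⟨x, hxA, fun hx => hCT x hx.2 hxT⟩
      omega
    have hY3 : Y.ncard =
        (A ∩ ↑T).ncard + ((↑S : Set V) ∩ ↑T).ncard + ((↑S : Set V) ∩ C).ncard := by
      rw [hYdef]
      refine ncard_triple ?_ ?_ ?_ <;> rw [Set.disjoint_left]
      · rintro v ⟨h1, -⟩ ⟨h2, -⟩; exact hAS v h1 h2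
      · rintro v ⟨-, h1⟩ ⟨-, h2⟩; exact hCT v h2 h1
      · rintro v ⟨-, h1⟩ ⟨-, h2⟩; exact hCT v h2 h1
    rcases (Ab ∩ Cb).eq_empty_or_nonempty with hempty | ⟨z, hzAb, hzCb⟩
    · -- second case: other component C1 of G − T is inside A ∪ S
      obtain ⟨d, hdT, hdC⟩ := exists_other_component hyT hTcut
      set C1 : Set V := compOf G (↑T) d with hC1def
      have hdC1 : d ∈ C1 := mem_compOf_self_s12 hdT
      have hC1T : ∀ v ∈ C1, v ∉ (↑T : Set V) := fun v hv => hv.2.1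
      have hC1C : ∀ v, v ∈ C1 → v ∈ C → False := fun v h1 h2 => compOf_elim hdC h2 h1
      have hC1frag : IsGraphFragment G C1 := ⟨T, d, hTcard, hTcut, by simpa using hdT, rfl⟩
      have hAC1 : A.ncard ≤ C1.ncard := hmin _ hC1frag
      have hC1split : C1.ncard = (A ∩ C1).ncard + ((↑S : Set V) ∩ C1).ncard := by
        have he : C1 = (A ∩ C1) ∪ ((↑S : Set V) ∩ C1) := by
          ext v
          constructor
          · intro hv
            rcases huniv v with h | h | h
            · exact Or.inl ⟨h, hv⟩
            · exact Or.inr ⟨h, hv⟩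
            · exfalso
              have hvmem : v ∈ Ab ∩ Cb := ⟨h, hC1T v hv, fun hc => hC1C v hv hc⟩
              rw [hempty] at hvmem
              exact hvmem
          · rintro (⟨-, h⟩ | ⟨-, h⟩) <;> exact h
        have hdisj : Disjoint (A ∩ C1) ((↑S : Set V) ∩ C1) := by
          rw [Set.disjoint_left]
          rintro v ⟨h1, -⟩ ⟨h2, -⟩
          exact hAS v h1 h2
        conv_lhs => rw [he]
        exact Set.ncard_union_eq hdisj (Set.toFinite _) (Set.toFinite _)
      have hSge : ((↑S : Set V) ∩ ↑T).ncard + ((↑S : Set V) ∩ C).ncard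
          + ((↑S : Set V) ∩ C1).ncard ≤ κ := by
        rw [← hSn]
        have hsub : ((↑S : Set V) ∩ ↑T) ∪ ((↑S : Set V) ∩ C) ∪ ((↑S : Set V) ∩ C1)
            ⊆ (↑S : Set V) := by
          rintro v ((⟨h, -⟩ | ⟨h, -⟩) | ⟨h, -⟩) <;> exact h
        have hle := Set.ncard_le_ncard hsub (Set.toFinite _)
        have hd1 : Disjoint ((↑S : Set V) ∩ ↑T) ((↑S : Set V) ∩ C) := by
          rw [Set.disjoint_left]; rintro v ⟨-, h1⟩ ⟨-, h2⟩; exact hCT v h2 h1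
        have hd2 : Disjoint ((↑S : Set V) ∩ ↑T) ((↑S : Set V) ∩ C1) := by
          rw [Set.disjoint_left]; rintro v ⟨-, h1⟩ ⟨-, h2⟩; exact hC1T v h2 h1
        have hd3 : Disjoint ((↑S : Set V) ∩ C) ((↑S : Set V) ∩ C1) := by
          rw [Set.disjoint_left]; rintro v ⟨-, h1⟩ ⟨-, h2⟩; exact hC1C v h2 h1
        rwa [ncard_triple hd1 hd2 hd3] at hle
      have hAge : (A ∩ ↑T).ncard + (A ∩ C).ncard + (A ∩ C1).ncard ≤ A.ncard := by
        have hsub : (A ∩ ↑T) ∪ (A ∩ C) ∪ (A ∩ C1) ⊆ A := by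
          rintro v ((⟨h, -⟩ | ⟨h, -⟩) | ⟨h, -⟩) <;> exact h
        have hle := Set.ncard_le_ncard hsub (Set.toFinite _)
        have hd1 : Disjoint (A ∩ ↑T) (A ∩ C) := by
          rw [Set.disjoint_left]; rintro v ⟨-, h1⟩ ⟨-, h2⟩; exact hCT v h2 h1
        have hd2 : Disjoint (A ∩ ↑T) (A ∩ C1) := by
          rw [Set.disjoint_left]; rintro v ⟨-, h1⟩ ⟨-, h2⟩; exact hC1T v h2 h1
        have hd3 : Disjoint (A ∩ C) (A ∩ C1) := by
          rw [Set.disjoint_left]; rintro v ⟨-, h1⟩ ⟨-, h2⟩; exact hC1C v h2 h1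
        rwa [ncard_triple hd1 hd2 hd3] at hle
      have hACpos : 0 < (A ∩ C).ncard :=
        (Set.ncard_pos (Set.toFinite _)).mpr ⟨y, hyA, hyC⟩
      omega
    · -- first case: Ab ∩ Cb nonempty
      set Y' : Set V := (Ab ∩ ↑T) ∪ ((↑S : Set V) ∩ ↑T) ∪ ((↑S : Set V) ∩ Cb) with hY'def
      have hY'cl : ∀ p q, p ∈ Ab ∩ Cb → G.Adj p q → q ∉ Y' → q ∈ Ab ∩ Cb := by
        intro p q hp hadj hqY
        by_cases hqS : q ∈ (↑S : Set V)
        · exfalso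
          by_cases hqT : q ∈ (↑T : Set V)
          · exact hqY (Or.inl (Or.inr ⟨hqS, hqT⟩))
          · exact hqY (Or.inr ⟨hqS, hCbcl p q hp.2 hadj hqT⟩)
        · have hqA : q ∈ Ab := hAbcl p q hp.1 hadj hqS
          by_cases hqT : q ∈ (↑T : Set V)
          · exact absurd (Or.inl (Or.inl ⟨hqA, hqT⟩)) hqY
          · exact ⟨hqA, hCbcl p q hp.2 hadj hqT⟩
      have hzY : z ∉ Y' := by
        rintro ((⟨-, h⟩ | ⟨h, -⟩) | ⟨h, -⟩)
        · exact hzCb.1 h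
        · exact hAbS z hzAb h
        · exact hAbS z hzAb h
      have hyY' : y ∉ Y' := by
        rintro ((⟨h, -⟩ | ⟨h, -⟩) | ⟨h, -⟩)
        · exact hAbA y h hyA
        · exact hAS y hyA h
        · exact hAS y hyA h
      have hcompY' : compOf G Y' z ⊆ Ab ∩ Cb :=
        compOf_subset_of_closed ⟨hzAb, hzCb⟩ hY'cl
      have hY'cut : 2 ≤ numComponents G Y' :=
        two_le_numComponents_s12 hzY hyY' (fun h => hAbA y (hcompY' h).1 hyA)
      have hY'ge : κ ≤ Y'.ncard := vconn_le_ncard hY'cut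
      have hY'3 : Y'.ncard =
          (Ab ∩ ↑T).ncard + ((↑S : Set V) ∩ ↑T).ncard + ((↑S : Set V) ∩ Cb).ncard := by
        rw [hY'def]
        refine ncard_triple ?_ ?_ ?_ <;> rw [Set.disjoint_left]
        · rintro v ⟨h1, -⟩ ⟨h2, -⟩; exact hAbS v h1 h2
        · rintro v ⟨-, h1⟩ ⟨-, h2⟩; exact h2.1 h1
        · rintro v ⟨-, h1⟩ ⟨-, h2⟩; exact h2.1 h1
      have hScount : κ = ((↑S : Set V) ∩ C).ncard + ((↑S : Set V) ∩ ↑T).ncard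
          + ((↑S : Set V) ∩ Cb).ncard := by
        have hSsplit : (↑S : Set V) = ((↑S : Set V) ∩ C) ∪ ((↑S : Set V) ∩ ↑T)
            ∪ ((↑S : Set V) ∩ Cb) := by
          ext v
          constructor
          · intro hv
            rcases hTuniv v with h | h | h
            · exact Or.inl (Or.inl ⟨hv, h⟩)
            · exact Or.inl (Or.inr ⟨hv, h⟩)
            · exact Or.inr ⟨hv, h⟩
          · rintro ((⟨h, -⟩ | ⟨h, -⟩) | ⟨h, -⟩) <;> exact h
        have hd1 : Disjoint ((↑S : Set V) ∩ C) ((↑S : Set V) ∩ ↑T) := by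
          rw [Set.disjoint_left]; rintro v ⟨-, h1⟩ ⟨-, h2⟩; exact hCT v h1 h2
        have hd2 : Disjoint ((↑S : Set V) ∩ C) ((↑S : Set V) ∩ Cb) := by
          rw [Set.disjoint_left]; rintro v ⟨-, h1⟩ ⟨-, h2⟩; exact h2.2 h1
        have hd3 : Disjoint ((↑S : Set V) ∩ ↑T) ((↑S : Set V) ∩ Cb) := by
          rw [Set.disjoint_left]; rintro v ⟨-, h1⟩ ⟨-, h2⟩; exact h2.1 h1
        have h := ncard_triple hd1 hd2 hd3
        rw [← hSsplit, hSn] at h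
        exact h
      omega
  have hAsubT : A ⊆ (↑T : Set V) := fun y hy => by
    by_contra hyT
    exact claim1 y hy hyT
  refine ⟨hAsubT, ?_⟩
  -- Part 2
  have hAeqAT : (A ∩ ↑T) = A := Set.inter_eq_self_of_subset_left hAsubT
  have key : ∀ e, e ∉ (↑T : Set V) → A.ncard ≤ ((↑S : Set V) ∩ compOf G (↑T) e).ncard := by
    intro e heT
    set C : Set V := compOf G (↑T) e with hCdef
    have heC : e ∈ C := mem_compOf_self_s12 heT
    have hCT : ∀ v ∈ C, v ∉ (↑T : Set V) := fun v hv => hv.2.1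
    have hCcl : ∀ p q, p ∈ C → G.Adj p q → q ∉ (↑T : Set V) → q ∈ C :=
      fun p q hp hadj hq => adj_mem_compOf hp hadj hq
    have hACdisj : ∀ v, v ∈ A → v ∈ C → False := fun v h1 h2 => hCT v h2 (hAsubT h1)
    have hCfrag : IsGraphFragment G C := ⟨T, e, hTcard, hTcut, by simpa using heT, rfl⟩
    rcases (Ab ∩ C).eq_empty_or_nonempty with hempty | ⟨z, hzAb, hzC⟩
    · have hCS : C ⊆ (↑S : Set V) := by
        intro v hv
        rcases huniv v with h | h | h
        · exact absurd hv (fun hc => hACdisj v h hc)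
        · exact h
        · exfalso
          have hvmem : v ∈ Ab ∩ C := ⟨h, hv⟩
          rw [hempty] at hvmem
          exact hvmem
      rw [Set.inter_eq_self_of_subset_right hCS]
      exact hmin _ hCfrag
    · set Z : Set V := (Ab ∩ ↑T) ∪ ((↑S : Set V) ∩ ↑T) ∪ ((↑S : Set V) ∩ C) with hZdef
      have hZcl : ∀ p q, p ∈ Ab ∩ C → G.Adj p q → q ∉ Z → q ∈ Ab ∩ C := by
        intro p q hp hadj hqZ
        by_cases hqS : q ∈ (↑S : Set V)
        · exfalso
          by_cases hqT : q ∈ (↑T : Set V)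
          · exact hqZ (Or.inl (Or.inr ⟨hqS, hqT⟩))
          · exact hqZ (Or.inr ⟨hqS, hCcl p q hp.2 hadj hqT⟩)
        · have hqA : q ∈ Ab := hAbcl p q hp.1 hadj hqS
          by_cases hqT : q ∈ (↑T : Set V)
          · exact absurd (Or.inl (Or.inl ⟨hqA, hqT⟩)) hqZ
          · exact ⟨hqA, hCcl p q hp.2 hadj hqT⟩
      have hzZ : z ∉ Z := by
        rintro ((⟨-, h⟩ | ⟨h, -⟩) | ⟨h, -⟩)
        · exact hCT z hzC h
        · exact hAbS z hzAb h
        · exact hAbS z hzAb h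
      have haZ : a ∉ Z := by
        rintro ((⟨h, -⟩ | ⟨h, -⟩) | ⟨h, -⟩)
        · exact hAbA a h haA
        · exact hAS a haA h
        · exact hAS a haA h
      have hcompZ : compOf G Z z ⊆ Ab ∩ C :=
        compOf_subset_of_closed ⟨hzAb, hzC⟩ hZcl
      have hZcut : 2 ≤ numComponents G Z :=
        two_le_numComponents_s12 hzZ haZ (fun h => hAbA a (hcompZ h).1 haA)
      have hZge : κ ≤ Z.ncard := vconn_le_ncard hZcut
      have hZ3 : Z.ncard =
          (Ab ∩ ↑T).ncard + ((↑S : Set V) ∩ ↑T).ncard + ((↑S : Set V) ∩ C).ncard := by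
        rw [hZdef]
        refine ncard_triple ?_ ?_ ?_ <;> rw [Set.disjoint_left]
        · rintro v ⟨h1, -⟩ ⟨h2, -⟩; exact hAbS v h1 h2
        · rintro v ⟨-, h1⟩ ⟨-, h2⟩; exact hCT v h2 h1
        · rintro v ⟨-, h1⟩ ⟨-, h2⟩; exact hCT v h2 h1
      have hAn : (A ∩ ↑T).ncard = A.ncard := by rw [hAeqAT]
      omega
  obtain ⟨c, hcT⟩ := exists_vertex_notin hTcut
  obtain ⟨d, hdT, hdC⟩ := exists_other_component hcT hTcut
  have k1 := key c hcT
  have k2 := key d hdT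
  have hsum : ((↑S : Set V) ∩ compOf G (↑T) c).ncard
      + ((↑S : Set V) ∩ compOf G (↑T) d).ncard ≤ κ := by
    rw [← hSn]
    have hsub : ((↑S : Set V) ∩ compOf G (↑T) c) ∪ ((↑S : Set V) ∩ compOf G (↑T) d)
        ⊆ (↑S : Set V) := by
      rintro v (⟨h, -⟩ | ⟨h, -⟩) <;> exact h
    have hle := Set.ncard_le_ncard hsub (Set.toFinite _)
    have hdisj : Disjoint ((↑S : Set V) ∩ compOf G (↑T) c)
        ((↑S : Set V) ∩ compOf G (↑T) d) := by
      rw [Set.disjoint_left]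
      rintro v ⟨-, h1⟩ ⟨-, h2⟩
      exact compOf_elim hdC h1 h2
    rwa [Set.ncard_union_eq hdisj (Set.toFinite _) (Set.toFinite _)] at hle
  omega
end
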